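/- arXiv:2501.11834 — 7 statements merged into one kernel-verified Lean document; each statement's English description precedes it below -/
import Mathlib

section
/- If there exists a g1-regular (K1, F1, Z1, S1) PDA in which every row contains the same number of stars, where g1 ≥ 2, then there exists a (g1−1)-regular (K1, (g1−1)F1, (g1−1)Z1, g1·S1) base PDA with parameter λ = g1−1. -/
open Finset

/-- A (K,F,Z,S) placement delivery array: an F×K array over {*} ∪ [1:S],
    with `none` playing the role of `*`. Columns are indexed by `κ`. -/
def IsPDA {F S : ℕ} {κ : Type} [Fintype κ]
    (Z : ℕ) (P : Fin F → κ → Option (Fin S)) : Prop :=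
  -- C1: each column contains exactly Z stars
  (∀ k : κ, (Finset.univ.filter (fun j : Fin F => P j k = none)).card = Z) ∧
  -- C2: every integer occurs at least once
  (∀ s : Fin S, ∃ j k, P j k = some s) ∧
  -- C3: the 2×2 star-crossing condition
  (∀ j₁ j₂ : Fin F, ∀ k₁ k₂ : κ, ∀ s : Fin S,
    (j₁, k₁) ≠ (j₂, k₂) → P j₁ k₁ = some s → P j₂ k₂ = some s →
    P j₁ k₂ = none ∧ P j₂ k₁ = none)

/-- `P` is `g`-regular: every integer appears exactly `g` times. -/
def PDARegular {F S : ℕ} {κ : Type} [Fintype κ]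
    (g : ℕ) (P : Fin F → κ → Option (Fin S)) : Prop :=
  ∀ s : Fin S, (Finset.univ.filter
    (fun jk : Fin F × κ => P jk.1 jk.2 = some s)).card = g

/-- A base PDA with parameter `lam`: a PDA with `lam ∣ F`, `lam ∣ Z`,
    star pattern row-periodic with period `F/lam` (C4), and a star-row
    assignment `φ` into the first `F/lam` rows with all fibers of size
    `lam*S/F` (C5, stated multiplicatively: `card * F = lam * S`). -/
def IsBasePDA {F S : ℕ} {κ : Type} [Fintype κ]
    (Z lam : ℕ) (P : Fin F → κ → Option (Fin S)) : Prop :=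
  IsPDA Z P ∧ 0 < lam ∧ lam ∣ F ∧ lam ∣ Z ∧
  (∀ j₁ j₂ : Fin F, ∀ k : κ, j₁.val % (F / lam) = j₂.val % (F / lam) →
    (P j₁ k = none ↔ P j₂ k = none)) ∧
  (∃ φ : Fin S → Fin F, (∀ s, (φ s).val < F / lam) ∧
    (∀ s : Fin S, ∀ j : Fin F, ∀ k : κ, P j k = some s → P (φ s) k = none) ∧
    (∀ r : Fin F, r.val < F / lam →
      (Finset.univ.filter (fun s : Fin S => φ s = r)).card * F = lam * S))

/-!
Label the `g` occurrences of each integer `s` of `P` by the elements of `Fin g`, and stack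
`g - 1` copies of `P`: in copy `i` the cell holding `s` with label `t` receives the new integer
`(t + i + 1, s)`, computed in `Fin g`. The new integer `(m, s)` then sits at the occurrences of
`s` whose label is not `m`, one in each copy, so it occurs `g - 1` times. The occurrence of `s`
labelled `m` gives its star row: by the crossing condition of `P` that row has a star in every
column where `(m, s)` appears. The fibre of this star-row map over a row of `P` is in bijection
with the non-star cells of the row, so constant row weight makes all fibres equally large.
-/

@[simp]
theorem Fin.divNat_finProdFinEquiv {m n : ℕ} (x : Fin m × Fin n) :
    (finProdFinEquiv x).divNat = x.1 :=
  congrArg Prod.fst ((finProdFinEquiv_symm_apply _).symm.trans (finProdFinEquiv.symm_apply_apply x))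

@[simp]
theorem Fin.modNat_finProdFinEquiv {m n : ℕ} (x : Fin m × Fin n) :
    (finProdFinEquiv x).modNat = x.2 :=
  congrArg Prod.snd ((finProdFinEquiv_symm_apply _).symm.trans (finProdFinEquiv.symm_apply_apply x))

theorem Fin.card_filter_modNat {m n : ℕ} (p : Fin n → Prop) [DecidablePred p] :
    #{j : Fin (m * n) | p j.modNat} = m * #{r | p r} := by
  calc #{j : Fin (m * n) | p j.modNat}
      = #(univ ×ˢ ({r | p r} : Finset (Fin n)) : Finset (Fin m × Fin n)) :=
        Finset.card_equiv finProdFinEquiv.symm (by simp)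
    _ = m * #{r | p r} := by simp

variable {F S : ℕ} {κ : Type}

theorem PDARegular.exists_eq_some [Fintype κ] {g : ℕ} {P : Fin F → κ → Option (Fin S)}
    (hP : PDARegular g P) (hg : 0 < g) (s : Fin S) : ∃ j k, P j k = some s := by
  obtain ⟨⟨j, k⟩, hjk⟩ := Finset.card_pos.mp (hP s ▸ hg)
  exact ⟨j, k, (Finset.mem_filter.mp hjk).2⟩

def IsOccurrenceLabeling {g : ℕ} (P : Fin F → κ → Option (Fin S))
    (τ : Fin F → κ → Fin g) : Prop :=
  ∀ t s, ∃! p : Fin F × κ, τ p.1 p.2 = t ∧ P p.1 p.2 = some s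

theorem PDARegular.exists_isOccurrenceLabeling [Fintype κ] {g : ℕ} [NeZero g]
    {P : Fin F → κ → Option (Fin S)} (hP : PDARegular g P) :
    ∃ τ : Fin F → κ → Fin g, IsOccurrenceLabeling P τ := by
  have e (s : Fin S) : {p : Fin F × κ // P p.1 p.2 = some s} ≃ Fin g :=
    Fintype.equivFinOfCardEq (by rw [Fintype.card_subtype]; exact hP s)
  let τ (j : Fin F) (k : κ) : Fin g :=
    match h : P j k with
    | some s => e s ⟨(j, k), h⟩
    | none => 0
  have hτ {j k s} (h : P j k = some s) : τ j k = e s ⟨(j, k), h⟩ := by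
    simp only [τ]
    split
    · rename_i s' h'
      obtain rfl : s' = s := Option.some_injective _ (h'.symm.trans h)
      rfl
    · simp_all
  refine ⟨τ, fun t s => ⟨((e s).symm t).1, ⟨?_, ((e s).symm t).2⟩, ?_⟩⟩
  · rw [hτ ((e s).symm t).2]
    simp
  · rintro ⟨j, k⟩ ⟨rfl, h⟩
    rw [hτ h, Equiv.symm_apply_apply]

namespace IsOccurrenceLabeling

variable {g : ℕ} {P : Fin F → κ → Option (Fin S)} {τ : Fin F → κ → Fin g}
  (hτ : IsOccurrenceLabeling P τ)

noncomputable def cell (t : Fin g) (s : Fin S) : Fin F × κ :=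
  (hτ t s).exists.choose

theorem label_cell (t : Fin g) (s : Fin S) : τ (hτ.cell t s).1 (hτ.cell t s).2 = t :=
  (hτ t s).exists.choose_spec.1

theorem apply_cell (t : Fin g) (s : Fin S) : P (hτ.cell t s).1 (hτ.cell t s).2 = some s :=
  (hτ t s).exists.choose_spec.2

theorem cell_eq {j : Fin F} {k : κ} {s : Fin S} (h : P j k = some s) :
    hτ.cell (τ j k) s = (j, k) :=
  (hτ _ s).unique ⟨hτ.label_cell _ s, hτ.apply_cell _ s⟩ ⟨rfl, h⟩

theorem cell_injective : Function.Injective (Function.uncurry hτ.cell) := by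
  rintro ⟨t₁, s₁⟩ ⟨t₂, s₂⟩ h
  simp only [Function.uncurry_apply_pair] at h
  refine Prod.ext ?_ (Option.some_injective _ ?_)
  · rw [← hτ.label_cell t₁ s₁, ← hτ.label_cell t₂ s₂, h]
  · rw [← hτ.apply_cell t₁ s₁, ← hτ.apply_cell t₂ s₂, h]

theorem card_filter_cell_fst_eq [Fintype κ] {c : ℕ} (hc : ∀ j, #{k | P j k = none} = c)
    (r : Fin F) : #{x : Fin g × Fin S | (hτ.cell x.1 x.2).1 = r} = Fintype.card κ - c := by
  have hstars := Finset.card_filter_add_card_filter_not (s := univ) (fun k => P r k = none)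
  rw [hc r, card_univ] at hstars
  rw [← show #{k | ¬P r k = none} = Fintype.card κ - c by omega]
  refine Finset.card_bij (fun x _ => (hτ.cell x.1 x.2).2) ?_ ?_ ?_
  · rintro ⟨t, s⟩ hx
    simp only [mem_filter, mem_univ, true_and] at hx ⊢
    rw [← hx, hτ.apply_cell]
    simp
  · rintro ⟨t₁, s₁⟩ hx₁ ⟨t₂, s₂⟩ hx₂ hk
    simp only [mem_filter, mem_univ, true_and] at hx₁ hx₂
    exact hτ.cell_injective (Prod.ext (hx₁.trans hx₂.symm) hk)
  · intro k hk
    simp only [mem_filter, mem_univ, true_and] at hk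
    obtain ⟨s, hs⟩ := Option.ne_none_iff_exists'.mp hk
    exact ⟨(τ r k, s), by simp [hτ.cell_eq hs], by simp [hτ.cell_eq hs]⟩

theorem mul_card_sub_eq [Fintype κ] (hτ : IsOccurrenceLabeling P τ) {c : ℕ}
    (hc : ∀ j, #{k | P j k = none} = c) : F * (Fintype.card κ - c) = g * S := by
  calc F * (Fintype.card κ - c)
      = ∑ r : Fin F, #{x : Fin g × Fin S | (hτ.cell x.1 x.2).1 = r} := by
        simp [hτ.card_filter_cell_fst_eq hc]
    _ = g * S := by
        rw [← Finset.card_eq_sum_card_fiberwise (fun _ _ => Finset.mem_univ _)]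
        simp

end IsOccurrenceLabeling

variable {n : ℕ}

def baseTransform (P : Fin F → κ → Option (Fin S)) (τ : Fin F → κ → Fin (n + 1))
    (j : Fin (n * F)) (k : κ) : Option (Fin ((n + 1) * S)) :=
  let (i, r) := finProdFinEquiv.symm j
  (P r k).map fun s => finProdFinEquiv (τ r k + i.succ, s)

variable {P : Fin F → κ → Option (Fin S)} {τ : Fin F → κ → Fin (n + 1)}

theorem baseTransform_eq_none_iff {j : Fin (n * F)} {k : κ} :
    baseTransform P τ j k = none ↔ P j.modNat k = none := by
  simp [baseTransform]

theorem baseTransform_eq_some_iff {i : Fin n} {r : Fin F} {k : κ} {m : Fin (n + 1)}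
    {s : Fin S} :
    baseTransform P τ (finProdFinEquiv (i, r)) k = some (finProdFinEquiv (m, s)) ↔
      P r k = some s ∧ τ r k + i.succ = m := by
  simp [baseTransform, and_comm]

namespace IsOccurrenceLabeling

theorem pdaRegular_baseTransform [Fintype κ] (hτ : IsOccurrenceLabeling P τ) :
    PDARegular n (baseTransform P τ) := by
  intro σ
  obtain ⟨⟨m, s⟩, rfl⟩ := finProdFinEquiv.surjective σ
  let occurrence (i : Fin n) : Fin (n * F) × κ :=
    (finProdFinEquiv (i, (hτ.cell (m - i.succ) s).1), (hτ.cell (m - i.succ) s).2)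
  calc _ = #(univ : Finset (Fin n)) := by
        refine Finset.card_nbij' (fun x => x.1.divNat) occurrence (fun _ _ => by simp) ?_ ?_
          (fun _ _ => by simp [occurrence])
        · intro i _
          simp [occurrence, baseTransform_eq_some_iff, hτ.apply_cell, hτ.label_cell]
        · rintro ⟨j, k⟩ hjk
          obtain ⟨⟨i, r⟩, rfl⟩ := finProdFinEquiv.surjective j
          simp only [coe_filter, mem_univ, true_and, Set.mem_ofPred_eq,
            baseTransform_eq_some_iff] at hjk
          simp [occurrence, ← hjk.2, hτ.cell_eq hjk.1]
    _ = n := by simp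

theorem isPDA_baseTransform [Fintype κ] (hτ : IsOccurrenceLabeling P τ) {Z : ℕ}
    (hP : IsPDA Z P) (hn : 0 < n) : IsPDA (n * Z) (baseTransform P τ) := by
  refine ⟨fun k => ?_, hτ.pdaRegular_baseTransform.exists_eq_some hn, ?_⟩
  · simp only [baseTransform_eq_none_iff]
    rw [Fin.card_filter_modNat (fun r => P r k = none), hP.1 k]
  intro j₁ j₂ k₁ k₂ σ hne h₁ h₂
  obtain ⟨⟨i₁, r₁⟩, rfl⟩ := finProdFinEquiv.surjective j₁
  obtain ⟨⟨i₂, r₂⟩, rfl⟩ := finProdFinEquiv.surjective j₂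
  obtain ⟨⟨m, s⟩, rfl⟩ := finProdFinEquiv.surjective σ
  rw [baseTransform_eq_some_iff] at h₁ h₂
  have hcells : (r₁, k₁) ≠ (r₂, k₂) := by
    rintro ⟨⟩
    have : i₁ = i₂ := Fin.succ_injective _ (add_left_cancel (h₁.2.trans h₂.2.symm))
    exact hne (by rw [this])
  obtain ⟨h₁₂, h₂₁⟩ := hP.2.2 r₁ r₂ k₁ k₂ s hcells h₁.1 h₂.1
  simp [baseTransform_eq_none_iff, h₁₂, h₂₁]

theorem apply_cell_eq_none_of_baseTransform [Fintype κ] (hτ : IsOccurrenceLabeling P τ) {Z : ℕ}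
    (hP : IsPDA Z P) {j : Fin (n * F)} {k : κ} {m : Fin (n + 1)} {s : Fin S}
    (h : baseTransform P τ j k = some (finProdFinEquiv (m, s))) :
    P (hτ.cell m s).1 k = none := by
  obtain ⟨⟨i, r⟩, rfl⟩ := finProdFinEquiv.surjective j
  obtain ⟨hs, hm⟩ := baseTransform_eq_some_iff.mp h
  have hne : hτ.cell m s ≠ (r, k) := by
    intro hcell
    have hlabel := hτ.label_cell m s
    rw [hcell, ← hm] at hlabel
    exact Fin.succ_ne_zero i (left_eq_add.mp hlabel)
  exact (hP.2.2 _ _ _ _ s hne (hτ.apply_cell m s) hs).1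

theorem isBasePDA_baseTransform [Fintype κ] (hτ : IsOccurrenceLabeling P τ) {Z c : ℕ}
    (hP : IsPDA Z P) (hc : ∀ j, #{k | P j k = none} = c) (hn : 0 < n) :
    IsBasePDA (n * Z) n (baseTransform P τ) := by
  have hperiod : n * F / n = F := Nat.mul_div_cancel_left F hn
  let φ (σ : Fin ((n + 1) * S)) : Fin (n * F) :=
    Fin.castLE (Nat.le_mul_of_pos_left F hn)
      (hτ.cell (finProdFinEquiv.symm σ).1 (finProdFinEquiv.symm σ).2).1
  refine ⟨hτ.isPDA_baseTransform hP hn, hn, dvd_mul_right n F, dvd_mul_right n Z, ?_,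
    φ, ?_, ?_, ?_⟩
  · intro j₁ j₂ k h
    rw [hperiod] at h
    rw [baseTransform_eq_none_iff, baseTransform_eq_none_iff,
      show j₁.modNat = j₂.modNat from Fin.ext (by simpa using h)]
  · intro σ
    rw [hperiod]
    exact (hτ.cell _ _).1.isLt
  · intro σ j k h
    obtain ⟨⟨m, s⟩, rfl⟩ := finProdFinEquiv.surjective σ
    rw [baseTransform_eq_none_iff]
    convert hτ.apply_cell_eq_none_of_baseTransform hP h
    ext
    simp [φ, Nat.mod_eq_of_lt]
  · intro r hr
    rw [hperiod] at hr
    have hfibre : #{σ | φ σ = r} = Fintype.card κ - c :=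
      (Finset.card_equiv finProdFinEquiv.symm (by simp [φ, Fin.ext_iff])).trans
        (hτ.card_filter_cell_fst_eq hc ⟨r, hr⟩)
    calc #{σ | φ σ = r} * (n * F) = n * (F * (Fintype.card κ - c)) := by rw [hfibre]; ring
      _ = n * ((n + 1) * S) := by rw [hτ.mul_card_sub_eq hc]

end IsOccurrenceLabeling

/-- a g₁-regular (K₁,F₁,Z₁,S₁) PDA with the same number of stars
    in each row (g₁ ≥ 2) can be transformed into a (g₁−1)-regular
    (K₁,(g₁−1)F₁,(g₁−1)Z₁,g₁S₁) base PDA with parameter λ = g₁−1. -/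
theorem base_pda_transform (K₁ F₁ Z₁ S₁ g₁ : ℕ) (hg : 2 ≤ g₁)
    (h : ∃ P : Fin F₁ → Fin K₁ → Option (Fin S₁),
      IsPDA Z₁ P ∧ PDARegular g₁ P ∧
      ∃ c, ∀ j : Fin F₁,
        (Finset.univ.filter (fun k : Fin K₁ => P j k = none)).card = c) :
    ∃ Q : Fin ((g₁ - 1) * F₁) → Fin K₁ → Option (Fin (g₁ * S₁)),
      IsBasePDA ((g₁ - 1) * Z₁) (g₁ - 1) Q ∧ PDARegular (g₁ - 1) Q := by
  obtain ⟨P, hP, hreg, c, hc⟩ := h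
  obtain ⟨n, rfl⟩ : ∃ n, g₁ = n + 1 := ⟨g₁ - 1, by omega⟩
  obtain ⟨τ, hτ⟩ := hreg.exists_isOccurrenceLabeling
  exact ⟨baseTransform P τ, hτ.isBasePDA_baseTransform hP hc (by omega),
    hτ.pdaRegular_baseTransform⟩
end

section
/- For any integer q ≥ 2, there exists a 2-regular (q², 2q, 2, (q−1)q²) base PDA with parameter λ = 1. -/
open Finset

/-!
Take rows `(i, x) ∈ Bool × α` and columns `c : Bool → α` (points of `α²`). Put a star at
`((i, x), c)` iff `c i = x`, and otherwise the symbol `(i, c (!i), {x, c i})`. The symbol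
`(i, w, {a, b})` then occurs exactly at `((i, a), c)` and `((i, b), c')`, where `c` and `c'` take
the value `w` at `!i` and the values `b` and `a` at `i`; the two crossing cells are stars.
All columns containing `(i, w, {a, b})` have `c (!i) = w`, so row `(!i, w)` is a star row for it,
and each row serves `(|α| choose 2)` symbols. For `λ = 1` the row order plays no role, so any
bijections of the index types with `Fin _` finish the proof.
-/

section Relabel

variable {ρ κ σ κ' : Type} {F S : ℕ}

lemma isBasePDA_one_iff [Fintype κ'] {Z : ℕ} (P : Fin F → κ' → Option (Fin S)) :
    IsBasePDA Z 1 P ↔ IsPDA Z P ∧ ∃ φ : Fin S → Fin F,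
      (∀ s j k, P j k = some s → P (φ s) k = none) ∧ ∀ r, #{s | φ s = r} * F = S := by
  simp only [IsBasePDA, Nat.div_one, Nat.mod_eq_of_lt (Fin.is_lt _), Fin.val_inj, one_mul,
    Fin.is_lt, implies_true, true_implies, Nat.one_pos, one_dvd, true_and]
  exact ⟨fun ⟨hP, _, hφ⟩ => ⟨hP, hφ⟩, fun ⟨hP, hφ⟩ => ⟨hP, by rintro j _ k rfl; rfl, hφ⟩⟩

def relabel (Q : ρ → κ → Option σ) (eρ : ρ ≃ Fin F) (eκ : κ ≃ κ') (eσ : σ ≃ Fin S) :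
    Fin F → κ' → Option (Fin S) :=
  fun j k => (Q (eρ.symm j) (eκ.symm k)).map eσ

variable {Q : ρ → κ → Option σ} {eρ : ρ ≃ Fin F} {eκ : κ ≃ κ'} {eσ : σ ≃ Fin S}

@[simp]
lemma relabel_eq_none_iff {j : Fin F} {k : κ'} :
    relabel Q eρ eκ eσ j k = none ↔ Q (eρ.symm j) (eκ.symm k) = none :=
  Option.map_eq_none_iff

@[simp]
lemma relabel_eq_some_iff {j : Fin F} {k : κ'} {s : Fin S} :
    relabel Q eρ eκ eσ j k = some s ↔ Q (eρ.symm j) (eκ.symm k) = some (eσ.symm s) := by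
  simp [relabel, ← Equiv.eq_symm_apply]

lemma isPDA_relabel [Fintype ρ] [Fintype κ'] {Z : ℕ}
    (h_star : ∀ c, #{r | Q r c = none} = Z)
    (h_occ : ∀ s, ∃ r c, Q r c = some s)
    (h_cross : ∀ r₁ r₂ c₁ c₂ s, (r₁, c₁) ≠ (r₂, c₂) → Q r₁ c₁ = some s → Q r₂ c₂ = some s →
      Q r₁ c₂ = none ∧ Q r₂ c₁ = none) :
    IsPDA Z (relabel Q eρ eκ eσ) := by
  refine ⟨fun k => ?_, fun s => ?_, fun j₁ j₂ k₁ k₂ s hne h₁ h₂ => ?_⟩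
  · rw [← h_star (eκ.symm k)]
    exact card_equiv eρ.symm (by simp)
  · obtain ⟨r, c, h⟩ := h_occ (eσ.symm s)
    exact ⟨eρ r, eκ c, by simpa using h⟩
  · simp only [relabel_eq_some_iff] at h₁ h₂
    simp only [relabel_eq_none_iff]
    refine h_cross _ _ _ _ _ ?_ h₁ h₂
    simpa [Prod.ext_iff] using hne

lemma pdaRegular_relabel [Fintype ρ] [Fintype κ] [Fintype κ'] [DecidableEq σ] {g : ℕ}
    (h : ∀ s, #{x : ρ × κ | Q x.1 x.2 = some s} = g) : PDARegular g (relabel Q eρ eκ eσ) :=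
  fun s => h (eσ.symm s) ▸ card_equiv (eρ.symm.prodCongr eκ.symm) (by simp)

lemma isBasePDA_one_relabel [Fintype σ] [Fintype κ'] [DecidableEq ρ] {Z : ℕ}
    (hQ : IsPDA Z (relabel Q eρ eκ eσ)) (φ : σ → ρ)
    (hφ : ∀ s r c, Q r c = some s → Q (φ s) c = none)
    (h_fiber : ∀ r, #{s | φ s = r} * F = S) :
    IsBasePDA Z 1 (relabel Q eρ eκ eσ) := by
  refine (isBasePDA_one_iff _).2 ⟨hQ, eρ ∘ φ ∘ eσ.symm, fun s j k h => ?_, fun r => ?_⟩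
  · simpa using hφ _ _ _ (relabel_eq_some_iff.1 h)
  · convert h_fiber (eρ.symm r) using 2
    exact card_equiv eσ.symm (by simp [Equiv.eq_symm_apply])

end Relabel

lemma Bool.fun_eq_iff {α : Type} (i : Bool) {f g : Bool → α} :
    f = g ↔ f i = g i ∧ f (!i) = g (!i) := by
  rw [funext_iff, Bool.forall_bool]
  cases i
  exacts [Iff.rfl, _root_.and_comm]

lemma Nat.choose_two_mul_two (n : ℕ) : n.choose 2 * 2 = n * (n - 1) := by
  rw [Nat.choose_two_right, Nat.div_mul_cancel (Nat.even_mul_pred_self n).two_dvd]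

section PairArray

abbrev PairSymbol (α : Type) := Bool × α × {z : Sym2 α // ¬ z.IsDiag}

variable {α : Type} [DecidableEq α]

def pairArray (r : Bool × α) (c : Bool → α) : Option (PairSymbol α) :=
  if h : c r.1 = r.2 then none
  else some (r.1, c (!r.1), ⟨s(r.2, c r.1), Sym2.mk_isDiag_iff.not.2 (Ne.symm h)⟩)

def starRow (s : PairSymbol α) : Bool × α := (!s.1, s.2.1)

lemma pairArray_eq_none_iff {r : Bool × α} {c : Bool → α} :
    pairArray r c = none ↔ c r.1 = r.2 := by
  unfold pairArray
  split_ifs with h <;> simp [h]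

lemma pairArray_eq_some_iff {r : Bool × α} {c : Bool → α} {s : PairSymbol α} :
    pairArray r c = some s ↔ r.1 = s.1 ∧ c (!r.1) = s.2.1 ∧ s(r.2, c r.1) = s.2.2.1 := by
  unfold pairArray
  split_ifs with h
  · simp only [false_iff, not_and]
    intro _ _ hz
    exact s.2.2.2 (hz ▸ Sym2.mk_isDiag_iff.2 h.symm)
  · simp [Prod.ext_iff, Subtype.ext_iff]

lemma card_filter_pairArray_eq_none [Fintype α] (c : Bool → α) :
    #{r | pairArray r c = none} = 2 := by
  rw [card_eq_two]
  refine ⟨(false, c false), (true, c true), by simp, ?_⟩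
  ext ⟨i, x⟩
  cases i <;> simp [pairArray_eq_none_iff, eq_comm]

lemma card_filter_pairArray_eq_some [Fintype α] (s : PairSymbol α) :
    #{x : (Bool × α) × (Bool → α) | pairArray x.1 x.2 = some s} = 2 := by
  obtain ⟨i, w, z, hz⟩ := s
  induction z using Sym2.ind with | _ a b => ?_
  have hab : a ≠ b := Sym2.mk_isDiag_iff.not.1 hz
  let col : α → Bool → α := fun y j => if j = i then y else w
  rw [card_eq_two]
  refine ⟨((i, a), col b), ((i, b), col a), by simp [hab], ?_⟩
  ext ⟨⟨i', x⟩, c⟩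
  simp only [mem_filter, mem_univ, true_and, pairArray_eq_some_iff, mem_insert, mem_singleton,
    Prod.ext_iff, Bool.fun_eq_iff i, Sym2.eq_iff]
  constructor
  · rintro ⟨rfl, hw, ⟨rfl, hc⟩ | ⟨rfl, hc⟩⟩ <;> simp_all [col]
  · rintro (⟨⟨rfl, rfl⟩, hi, hw⟩ | ⟨⟨rfl, rfl⟩, hi, hw⟩) <;> simp_all [col]

lemma pairArray_cross {r₁ r₂ : Bool × α} {c₁ c₂ : Bool → α} {s : PairSymbol α}
    (hne : (r₁, c₁) ≠ (r₂, c₂)) (h₁ : pairArray r₁ c₁ = some s) (h₂ : pairArray r₂ c₂ = some s) :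
    pairArray r₁ c₂ = none ∧ pairArray r₂ c₁ = none := by
  rw [pairArray_eq_some_iff] at h₁ h₂
  obtain ⟨hi₁, hw₁, hz₁⟩ := h₁
  obtain ⟨hi₂, hw₂, hz₂⟩ := h₂
  have hi : r₁.1 = r₂.1 := hi₁.trans hi₂.symm
  rw [← hi] at hw₂ hz₂
  rw [pairArray_eq_none_iff, pairArray_eq_none_iff, ← hi]
  rcases Sym2.eq_iff.1 (hz₁.trans hz₂.symm) with ⟨hx, hc⟩ | ⟨hx₁, hx₂⟩
  · refine absurd ?_ hne
    rw [Prod.ext hi hx, (Bool.fun_eq_iff r₁.1).2 ⟨hc, hw₁.trans hw₂.symm⟩]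
  · exact ⟨hx₁.symm, hx₂⟩

lemma pairArray_starRow_eq_none {r : Bool × α} {c : Bool → α} {s : PairSymbol α}
    (h : pairArray r c = some s) : pairArray (starRow s) c = none := by
  obtain ⟨hi, hw, -⟩ := pairArray_eq_some_iff.1 h
  simpa [pairArray_eq_none_iff, starRow, ← hi] using hw

variable [Fintype α]

lemma card_filter_starRow_eq (r : Bool × α) :
    #{s | starRow s = r} = (Fintype.card α).choose 2 := by
  rw [← Sym2.card_subtype_not_diag, ← card_univ]
  refine card_nbij' (fun s => s.2.2) (fun z => (!r.1, r.2, z)) (by simp) (fun _ _ => ?_) ?_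
    (fun _ _ => rfl)
  · rw [mem_coe, mem_filter]
    exact ⟨mem_univ _, by simp [starRow]⟩
  · rintro ⟨i, w, z⟩ h
    simp_all [starRow, Prod.ext_iff]

lemma card_filter_starRow_mul (r : Bool × α) :
    #{s | starRow s = r} * (2 * Fintype.card α) = (Fintype.card α - 1) * Fintype.card α ^ 2 := by
  rw [card_filter_starRow_eq, ← mul_assoc, Nat.choose_two_mul_two]
  ring

lemma card_pairSymbol :
    Fintype.card (PairSymbol α) = (Fintype.card α - 1) * Fintype.card α ^ 2 := by
  simp only [Fintype.card_prod, Fintype.card_bool, Sym2.card_subtype_not_diag]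
  calc 2 * (Fintype.card α * (Fintype.card α).choose 2)
      = Fintype.card α * ((Fintype.card α).choose 2 * 2) := by ring
    _ = _ := by rw [Nat.choose_two_mul_two]; ring

end PairArray

theorem exists_base_pda_q_general (q : ℕ) :
    ∃ P : Fin (2 * q) → Fin (q ^ 2) → Option (Fin ((q - 1) * q ^ 2)),
      IsBasePDA 2 1 P ∧ PDARegular 2 P := by
  let eρ : Bool × Fin q ≃ Fin (2 * q) := Fintype.equivFinOfCardEq (by simp)
  let eκ : (Bool → Fin q) ≃ Fin (q ^ 2) := Fintype.equivFinOfCardEq (by simp)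
  let eσ : PairSymbol (Fin q) ≃ Fin ((q - 1) * q ^ 2) :=
    Fintype.equivFinOfCardEq (by rw [card_pairSymbol, Fintype.card_fin])
  have h_occ (s : PairSymbol (Fin q)) : ∃ r c, pairArray r c = some s := by
    obtain ⟨⟨r, c⟩, h⟩ := card_pos.1 (card_filter_pairArray_eq_some s ▸ two_pos)
    exact ⟨r, c, (mem_filter.1 h).2⟩
  have hP : IsPDA 2 (relabel pairArray eρ eκ eσ) :=
    isPDA_relabel card_filter_pairArray_eq_none h_occ fun _ _ _ _ _ => pairArray_cross
  refine ⟨_, isBasePDA_one_relabel hP starRow (fun _ _ _ => pairArray_starRow_eq_none) fun r => ?_,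
    pdaRegular_relabel card_filter_pairArray_eq_some⟩
  simpa using card_filter_starRow_mul r

/-- for any q ≥ 2 there exists a 2-regular (q², 2q, 2, (q−1)q²)
    base PDA with parameter λ = 1. -/
theorem exists_base_pda_q (q : ℕ) (hq : 2 ≤ q) :
    ∃ P : Fin (2 * q) → Fin (q ^ 2) → Option (Fin ((q - 1) * q ^ 2)),
      IsBasePDA 2 1 P ∧ PDARegular 2 P :=
  exists_base_pda_q_general q
end

section
/- If there exists a g1-regular (K1, F1, Z1, S1) base PDA with parameter λ, then for every positive integer m there exists an (m·g1)-regular PDA with parameters (m·K1, λ·(F1/λ)^m, Z1·(F1/λ)^{m−1}, S1·(F1/λ)^{m−1}). -/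
open Finset

/-!
Split the rows of the base array as pairs `(a, u)` with `a < λ`, `u < F/λ` (row `u + (F/λ)·a`),
and relabel each symbol `s` as `(φ s, index of s in its fibre)`. Conditions (C4) and (C5) then
say that a symbol labelled `u` only occurs in columns where every row `(a, u)` is a star.

The `m`-fold product has rows `(a, r)` with `r : Fin m → Fin (F/λ)` and columns `(i, k)`; its
entry there is the base entry at `((a, r i), k)` with the label of the symbol replaced by `r`
updated at `i`. Two occurrences of a symbol in the same block `i` inherit the star-crossing
property from the base array; in different blocks `i ≠ i'`, the crossing entries lie in rows
whose `i'`-coordinate is the label of the symbol in block `i'`, so they are stars.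
-/

open Function

section Relabel

variable {ρ κ σ ρ' κ' σ' : Type*}

def IsPDAOn [Fintype ρ] [Fintype κ] (Z : ℕ) (P : ρ → κ → Option σ) : Prop :=
  (∀ k, #{j | P j k = none} = Z) ∧
  (∀ s, ∃ j k, P j k = some s) ∧
  (∀ j₁ j₂ k₁ k₂ s, (j₁, k₁) ≠ (j₂, k₂) → P j₁ k₁ = some s → P j₂ k₂ = some s →
    P j₁ k₂ = none ∧ P j₂ k₁ = none)

def PDARegularOn [Fintype ρ] [Fintype κ] [DecidableEq σ] (g : ℕ) (P : ρ → κ → Option σ) :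
    Prop :=
  ∀ s, #{jk : ρ × κ | P jk.1 jk.2 = some s} = g

def pdaRelabel (P : ρ → κ → Option σ) (eR : ρ' ≃ ρ) (eC : κ' ≃ κ) (eS : σ ≃ σ') :
    ρ' → κ' → Option σ' :=
  fun j k => (P (eR j) (eC k)).map eS

variable {P : ρ → κ → Option σ} {eR : ρ' ≃ ρ} {eC : κ' ≃ κ} {eS : σ ≃ σ'}

lemma pdaRelabel_eq_none {j : ρ'} {k : κ'} :
    pdaRelabel P eR eC eS j k = none ↔ P (eR j) (eC k) = none :=
  Option.map_eq_none_iff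

lemma pdaRelabel_eq_some {j : ρ'} {k : κ'} {s : σ'} :
    pdaRelabel P eR eC eS j k = some s ↔ P (eR j) (eC k) = some (eS.symm s) := by
  simp [pdaRelabel, Option.map_eq_some_iff, ← Equiv.eq_symm_apply]

variable [Fintype ρ] [Fintype κ] [Fintype ρ'] [Fintype κ']

lemma IsPDAOn.relabel {Z : ℕ} (hP : IsPDAOn Z P) (eR : ρ' ≃ ρ) (eC : κ' ≃ κ) (eS : σ ≃ σ') :
    IsPDAOn Z (pdaRelabel P eR eC eS) := by
  obtain ⟨hstar, hocc, hcross⟩ := hP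
  refine ⟨fun k => ?_, fun s => ?_, fun j₁ j₂ k₁ k₂ s hne h₁ h₂ => ?_⟩
  · rw [← hstar (eC k)]
    exact card_equiv eR (by simp [pdaRelabel_eq_none])
  · obtain ⟨j, k, h⟩ := hocc (eS.symm s)
    exact ⟨eR.symm j, eC.symm k, by simpa [pdaRelabel_eq_some] using h⟩
  · rw [pdaRelabel_eq_some] at h₁ h₂
    simp only [pdaRelabel_eq_none]
    exact hcross _ _ _ _ _ (by simpa using hne) h₁ h₂

lemma PDARegularOn.relabel [DecidableEq σ] [DecidableEq σ'] {g : ℕ} (hP : PDARegularOn g P)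
    (eR : ρ' ≃ ρ) (eC : κ' ≃ κ) (eS : σ ≃ σ') : PDARegularOn g (pdaRelabel P eR eC eS) :=
  fun s => by
    rw [← hP (eS.symm s)]
    exact card_equiv (eR.prodCongr eC) (by simp [pdaRelabel_eq_some])

lemma IsPDAOn.exists_isPDA [Fintype σ] [DecidableEq σ] {Z g F K S : ℕ} (hP : IsPDAOn Z P)
    (hreg : PDARegularOn g P) (hF : Fintype.card ρ = F) (hK : Fintype.card κ = K)
    (hS : Fintype.card σ = S) :
    ∃ Q : Fin F → Fin K → Option (Fin S), IsPDA Z Q ∧ PDARegular g Q :=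
  let eR := (Fintype.equivFinOfCardEq hF).symm
  let eC := (Fintype.equivFinOfCardEq hK).symm
  let eS := Fintype.equivFinOfCardEq hS
  ⟨pdaRelabel P eR eC eS, hP.relabel eR eC eS, hreg.relabel eR eC eS⟩

end Relabel

lemma card_filter_prod_eq_sum {α β : Type*} [Fintype α] [Fintype β] (p : α → β → Prop)
    [∀ a b, Decidable (p a b)] : #{x : α × β | p x.1 x.2} = ∑ b, #{a | p a b} := by
  simp only [card_filter, Fintype.sum_prod_type_right]

section CartesianPower

variable {α ρ β κ : Type*} (ι : Type*) [DecidableEq ι]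

def pdaCartesianPower (P : α × ρ → κ → Option (ρ × β)) :
    α × (ι → ρ) → ι × κ → Option ((ι → ρ) × β) :=
  fun x c => (P (x.1, x.2 c.1) c.2).map fun y => (update x.2 c.1 y.1, y.2)

def HasLabelStarRows (P : α × ρ → κ → Option (ρ × β)) : Prop :=
  ∀ x k u b, P x k = some (u, b) → ∀ a, P (a, u) k = none

variable {ι} {P : α × ρ → κ → Option (ρ × β)}

lemma pdaCartesianPower_eq_none {x : α × (ι → ρ)} {c : ι × κ} :
    pdaCartesianPower ι P x c = none ↔ P (x.1, x.2 c.1) c.2 = none :=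
  Option.map_eq_none_iff

lemma pdaCartesianPower_eq_some {x : α × (ι → ρ)} {c : ι × κ} {w : ι → ρ} {b : β} :
    pdaCartesianPower ι P x c = some (w, b) ↔
      P (x.1, x.2 c.1) c.2 = some (w c.1, b) ∧ ∀ l ≠ c.1, x.2 l = w l := by
  simp only [pdaCartesianPower, Option.map_eq_some_iff, Prod.mk.injEq, update_eq_iff]
  constructor
  · rintro ⟨⟨u, b'⟩, hP, ⟨rfl, hx⟩, rfl⟩
    exact ⟨hP, hx⟩
  · rintro ⟨hP, hx⟩
    exact ⟨_, hP, ⟨rfl, hx⟩, rfl⟩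

variable [Fintype α] [Fintype ρ] [Fintype ι]

lemma card_pdaCartesianPower_eq_none (i : ι) (k : κ) :
    #{x | pdaCartesianPower ι P x (i, k) = none} =
      #{y | P y k = none} * Fintype.card ρ ^ (Fintype.card ι - 1) := by
  let e : α × (ι → ρ) ≃ (α × ρ) × ({l // l ≠ i} → ρ) :=
    ((Equiv.refl α).prodCongr (Equiv.piSplitAt i fun _ => ρ)).trans (Equiv.prodAssoc ..).symm
  rw [card_equiv e (t := univ.filter (P · k = none) ×ˢ (univ : Finset ({l // l ≠ i} → ρ)))
    (by simp [e, pdaCartesianPower_eq_none]), card_product]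
  simp [Fintype.card_subtype_compl]

lemma card_pdaCartesianPower_eq_some [DecidableEq ρ] [DecidableEq β] (i : ι) (k : κ)
    (w : ι → ρ) (b : β) :
    #{x | pdaCartesianPower ι P x (i, k) = some (w, b)} = #{y | P y k = some (w i, b)} := by
  apply card_nbij' (fun x => (x.1, x.2 i)) (fun y => (y.1, update w i y.2))
  · intro x hx
    simp_all [pdaCartesianPower_eq_some]
  · intro y hy
    simp_all [pdaCartesianPower_eq_some]
  · rintro ⟨a, r⟩ hx
    simp only [coe_filter, mem_univ, true_and, Set.mem_ofPred_eq, pdaCartesianPower_eq_some] at hx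
    simp only [Prod.mk.injEq, update_eq_iff, true_and]
    exact fun l hl => (hx.2 l hl).symm
  · intro y hy
    simp

variable [Fintype κ]

lemma IsPDAOn.cartesianPower [Nonempty ι] {Z : ℕ} (hP : IsPDAOn Z P)
    (hL : HasLabelStarRows P) :
    IsPDAOn (Z * Fintype.card ρ ^ (Fintype.card ι - 1)) (pdaCartesianPower ι P) := by
  obtain ⟨hstar, hocc, hcross⟩ := hP
  refine ⟨fun ⟨i, k⟩ => ?_, fun ⟨w, b⟩ => ?_, ?_⟩
  · rw [card_pdaCartesianPower_eq_none, hstar]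
  · obtain ⟨i⟩ := ‹Nonempty ι›
    obtain ⟨⟨a, u⟩, k, h⟩ := hocc (w i, b)
    refine ⟨(a, update w i u), (i, k), pdaCartesianPower_eq_some.2 ⟨by simpa using h, ?_⟩⟩
    exact fun l hl => update_of_ne hl _ _
  · rintro ⟨a₁, r₁⟩ ⟨a₂, r₂⟩ ⟨i₁, k₁⟩ ⟨i₂, k₂⟩ ⟨w, b⟩ hne h₁ h₂
    rw [pdaCartesianPower_eq_some] at h₁ h₂
    obtain ⟨hP₁, hr₁⟩ := h₁
    obtain ⟨hP₂, hr₂⟩ := h₂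
    dsimp only at hP₁ hr₁ hP₂ hr₂
    simp only [pdaCartesianPower_eq_none]
    by_cases hi : i₁ = i₂
    · subst hi
      refine hcross _ _ _ _ _ (fun heq => hne ?_) hP₁ hP₂
      simp only [Prod.mk.injEq, true_and] at heq ⊢
      refine ⟨⟨heq.1.1, funext fun l => ?_⟩, heq.2⟩
      by_cases hl : l = i₁
      · exact hl ▸ heq.1.2
      · rw [hr₁ l hl, hr₂ l hl]
    · exact ⟨hr₁ i₂ (Ne.symm hi) ▸ hL _ _ _ _ hP₂ a₁, hr₂ i₁ hi ▸ hL _ _ _ _ hP₁ a₂⟩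

lemma PDARegularOn.cartesianPower [DecidableEq ρ] [DecidableEq β] {g : ℕ}
    (hP : PDARegularOn g P) : PDARegularOn (Fintype.card ι * g) (pdaCartesianPower ι P) := by
  rintro ⟨w, b⟩
  calc #{xc : (α × (ι → ρ)) × (ι × κ) | pdaCartesianPower ι P xc.1 xc.2 = some (w, b)}
      = ∑ c : ι × κ, #{x | pdaCartesianPower ι P x c = some (w, b)} :=
        card_filter_prod_eq_sum fun x c => pdaCartesianPower ι P x c = some (w, b)
    _ = ∑ i, ∑ k, #{y | P y k = some (w i, b)} := by
        simp only [Fintype.sum_prod_type, card_pdaCartesianPower_eq_some]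
    _ = ∑ i : ι, g := sum_congr rfl fun i _ =>
        (card_filter_prod_eq_sum fun y k => P y k = some (w i, b)).symm.trans (hP (w i, b))
    _ = Fintype.card ι * g := by simp

end CartesianPower

lemma exists_equiv_prod_fin_of_card_fiber {σ ρ : Type*} [Fintype σ] [DecidableEq ρ] (f : σ → ρ)
    {t : ℕ} (h : ∀ r, #{s | f s = r} = t) : ∃ e : σ ≃ ρ × Fin t, ∀ s, (e s).1 = f s :=
  ⟨(Equiv.sigmaFiberEquiv f).symm.trans <|
      (Equiv.sigmaCongrRight fun r =>
        Fintype.equivFinOfCardEq <| (Fintype.card_subtype _).trans (h r)).trans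
      (Equiv.sigmaEquivProd _ _),
    fun _ => rfl⟩

lemma IsBasePDA.exists_hasLabelStarRows {F K S Z g lam : ℕ} {P : Fin F → Fin K → Option (Fin S)}
    (hP : IsBasePDA Z lam P) (hreg : PDARegular g P) :
    ∃ (t : ℕ) (P' : Fin lam × Fin (F / lam) → Fin K → Option (Fin (F / lam) × Fin t)),
      F / lam * t = S ∧ IsPDAOn Z P' ∧ PDARegularOn g P' ∧ HasLabelStarRows P' := by
  obtain ⟨hpda, -, hdvd, -, hperiodic, φ, hφlt, hφstar, hφcard⟩ := hP
  set q := F / lam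
  let eR : Fin lam × Fin q ≃ Fin F := finProdFinEquiv.trans (finCongr (Nat.mul_div_cancel' hdvd))
  let label : Fin S → Fin q := fun s => ⟨φ s, hφlt s⟩
  have hlabel : ∀ u, #{s | label s = u} = lam * S / F := fun u => by
    have hqF : q ≤ F := Nat.div_le_self F lam
    have hF : 0 < F := u.pos.trans_le hqF
    rw [← hφcard ⟨u, u.isLt.trans_le hqF⟩ u.isLt, Nat.mul_div_cancel _ hF]
    simp [label, Fin.ext_iff]
  obtain ⟨eS, heS⟩ := exists_equiv_prod_fin_of_card_fiber label hlabel
  refine ⟨_, pdaRelabel P eR (Equiv.refl _) eS, ?_, IsPDAOn.relabel hpda _ _ _,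
    PDARegularOn.relabel hreg _ _ _, ?_⟩
  · simpa using (Fintype.card_congr eS).symm
  · intro x k u b h a
    rw [pdaRelabel_eq_some] at h
    rw [pdaRelabel_eq_none]
    have hφ : label (eS.symm (u, b)) = u := by rw [← heS, Equiv.apply_symm_apply]
    refine (hperiodic _ _ k ?_).2 (hφstar _ _ _ h)
    simp [eR, ← Fin.val_eq_of_eq hφ, label]

/-- from a g₁-regular (K₁,F₁,Z₁,S₁) base PDA with parameter λ,
    for every positive integer m there is an (m·g₁)-regular
    (m·K₁, λ(F₁/λ)^m, Z₁(F₁/λ)^{m−1}, S₁(F₁/λ)^{m−1}) PDA. -/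
theorem cartesian_product_pda (K₁ F₁ Z₁ S₁ g₁ lam : ℕ)
    (h : ∃ P : Fin F₁ → Fin K₁ → Option (Fin S₁),
      IsBasePDA Z₁ lam P ∧ PDARegular g₁ P)
    (m : ℕ) (hm : 0 < m) :
    ∃ Q : Fin (lam * (F₁ / lam) ^ m) → Fin (m * K₁) →
        Option (Fin (S₁ * (F₁ / lam) ^ (m - 1))),
      IsPDA (Z₁ * (F₁ / lam) ^ (m - 1)) Q ∧ PDARegular (m * g₁) Q := by
  obtain ⟨P, hbase, hreg⟩ := h
  obtain ⟨t, P', hS, hpda, hreg', hL⟩ := hbase.exists_hasLabelStarRows hreg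
  obtain ⟨n, rfl⟩ : ∃ n, m = n + 1 := ⟨m - 1, by omega⟩
  have hpow := hpda.cartesianPower (ι := Fin (n + 1)) hL
  have hregpow := hreg'.cartesianPower (ι := Fin (n + 1))
  simp only [Fintype.card_fin, add_tsub_cancel_right] at hpow hregpow
  refine hpow.exists_isPDA hregpow (by simp) (by simp) ?_
  simp [← hS, pow_succ]
  ring
end

section
/- For all positive integers q, z, m, t with z < q and t ≤ m, there exists a C(m,t)·z^t-regular PDA with parameters (C(m,t)·q^t, z^t·C(q,z)^m, z^t·C(q,z)^m·(1 − ((q−z)/q)^t), (q−z)^t·C(q,z)^m). -/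
open Finset

/-!
Rows are pairs `(B, b)` with `B` an `m`-tuple of `z`-subsets of `[q]` and `b ∈ [z]^t`, columns
pairs `(T, a)` with `T` a `t`-subset of `[m]` and `a ∈ [q]^t`, and symbols pairs `(C, c)` with
`C` like `B` and `c ∈ [q-z]^t`. The cell `((B, b), (T, a))` is a star unless `a_j ∉ B_{T_j}` for
every `j`; otherwise, at each coordinate `T_j`, the element `x_j` of `B_{T_j}` indexed by `b_j` is
exchanged for `a_j`, and `c_j` indexes `x_j` in the complement of the new set.

For a fixed column this is a bijection from the non-star rows onto the symbols with
`a_j ∈ C_{T_j}` (exchange back), so every symbol occurs exactly once in each of the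
`C(m,t) z^t` columns compatible with it, and two cells carrying `(C, c)` lie in distinct columns
`k ≠ k'`. Coordinatewise, `C` is contained in the row `r` of the first cell together with the
points of `k`; since `k'` differs from `k` and its points lie in `C`, one of them lies in `r` at
the corresponding coordinate, i.e. `r` has a star in column `k'`.
-/

open Function

namespace SchemeA

section Reindex

variable {F K N Z g : ℕ} {R C Y : Type}

def reindex (P : R → C → Option Y) (eR : Fin F ≃ R) (eC : Fin K ≃ C) (eY : Fin N ≃ Y) :
    Fin F → Fin K → Option (Fin N) :=
  fun j k => (P (eR j) (eC k)).map eY.symm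

variable {P : R → C → Option Y} {eR : Fin F ≃ R} {eC : Fin K ≃ C} {eY : Fin N ≃ Y}

lemma reindex_eq_none {j : Fin F} {k : Fin K} :
    reindex P eR eC eY j k = none ↔ P (eR j) (eC k) = none :=
  Option.map_eq_none_iff

lemma reindex_eq_some {j : Fin F} {k : Fin K} {s : Fin N} :
    reindex P eR eC eY j k = some s ↔ P (eR j) (eC k) = some (eY s) := by
  unfold reindex
  generalize P (eR j) (eC k) = o
  cases o <;> simp [Equiv.eq_symm_apply, eq_comm]

variable [Fintype R]

lemma isPDA_reindex (hstar : ∀ c, Fintype.card {r // P r c = none} = Z)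
    (hcover : ∀ y, ∃ r c, P r c = some y)
    (hcross : ∀ r₁ r₂ c₁ c₂ y, (r₁, c₁) ≠ (r₂, c₂) →
      P r₁ c₁ = some y → P r₂ c₂ = some y → P r₁ c₂ = none) :
    IsPDA Z (reindex P eR eC eY) := by
  refine ⟨fun k => ?_, fun s => ?_, fun j₁ j₂ k₁ k₂ s hne h₁ h₂ => ?_⟩
  · rw [← hstar (eC k), ← Fintype.card_subtype]
    exact Fintype.card_congr (eR.subtypeEquiv fun _ => reindex_eq_none)
  · obtain ⟨r, c, h⟩ := hcover (eY s)
    exact ⟨eR.symm r, eC.symm c, by simpa [reindex_eq_some] using h⟩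
  · rw [reindex_eq_some] at h₁ h₂
    have hne' : (eR j₁, eC k₁) ≠ (eR j₂, eC k₂) := by
      simpa [Prod.ext_iff, eR.injective.eq_iff, eC.injective.eq_iff] using hne
    exact ⟨reindex_eq_none.2 (hcross _ _ _ _ _ hne' h₁ h₂),
      reindex_eq_none.2 (hcross _ _ _ _ _ hne'.symm h₂ h₁)⟩

lemma pdaRegular_reindex [Fintype C] [DecidableEq Y]
    (hreg : ∀ y, Fintype.card {rc : R × C // P rc.1 rc.2 = some y} = g) :
    PDARegular g (reindex P eR eC eY) := by
  intro s
  rw [← hreg (eY s), ← Fintype.card_subtype]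
  exact Fintype.card_congr ((eR.prodCongr eC).subtypeEquiv fun _ => reindex_eq_some)

end Reindex

section Extend

variable {ι κ α β γ δ : Type*} {e : ι → κ}
  {P : ι → α × β → Prop} {Q : ι → α × γ → Prop} {U : ι → α × δ → Prop}

noncomputable def extendMap (he : Injective e) (f : ∀ j, {p // P j p} → {p // Q j p})
    (r : {r : (κ → α) × (ι → β) // ∀ j, P j (r.1 (e j), r.2 j)}) :
    {s : (κ → α) × (ι → γ) // ∀ j, Q j (s.1 (e j), s.2 j)} :=
  ⟨(extend e (fun j => (f j ⟨_, r.2 j⟩).1.1) r.1.1, fun j => (f j ⟨_, r.2 j⟩).1.2),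
    fun j => by simpa only [he.extend_apply] using (f j ⟨_, r.2 j⟩).2⟩

variable (he : Injective e) (f : ∀ j, {p // P j p} → {p // Q j p})
  (r : {r : (κ → α) × (ι → β) // ∀ j, P j (r.1 (e j), r.2 j)})

lemma extendMap_fst_apply (j : ι) : (extendMap he f r).1.1 (e j) = (f j ⟨_, r.2 j⟩).1.1 := by
  dsimp only [extendMap]
  exact he.extend_apply _ _ _

lemma extendMap_fst_apply_of_notMem_range {i : κ} (hi : i ∉ Set.range e) :
    (extendMap he f r).1.1 i = r.1.1 i := by
  dsimp only [extendMap]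
  exact extend_apply' _ _ _ hi

lemma extendMap_apply (j : ι) :
    (⟨((extendMap he f r).1.1 (e j), (extendMap he f r).1.2 j), (extendMap he f r).2 j⟩ :
      {p // Q j p}) = f j ⟨_, r.2 j⟩ :=
  Subtype.ext (Prod.ext (extendMap_fst_apply he f r j) rfl)

lemma extendMap_extendMap (g : ∀ j, {p // Q j p} → {p // U j p}) :
    extendMap he g (extendMap he f r) = extendMap he (fun j => g j ∘ f j) r := by
  refine Subtype.ext (Prod.ext (funext fun i => ?_) (funext fun j => ?_))
  · by_cases hi : i ∈ Set.range e
    · obtain ⟨j, rfl⟩ := hi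
      rw [extendMap_fst_apply he g, extendMap_fst_apply he (fun j => g j ∘ f j)]
      exact congrArg (fun p => (g j p).1.1) (extendMap_apply he f r j)
    · rw [extendMap_fst_apply_of_notMem_range he _ _ hi,
        extendMap_fst_apply_of_notMem_range he _ _ hi,
        extendMap_fst_apply_of_notMem_range he _ _ hi]
  · exact congrArg (fun p => (g j p).1.2) (extendMap_apply he f r j)

lemma extendMap_id : extendMap he (fun j => (id : {p // P j p} → {p // P j p})) r = r := by
  refine Subtype.ext (Prod.ext (funext fun i => ?_) rfl)
  by_cases hi : i ∈ Set.range e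
  · obtain ⟨j, rfl⟩ := hi
    exact extendMap_fst_apply he _ r j
  · exact extendMap_fst_apply_of_notMem_range he _ _ hi

noncomputable def extendEquiv (f : ∀ j, {p // P j p} ≃ {p // Q j p}) :
    {r : (κ → α) × (ι → β) // ∀ j, P j (r.1 (e j), r.2 j)} ≃
      {s : (κ → α) × (ι → γ) // ∀ j, Q j (s.1 (e j), s.2 j)} where
  toFun := extendMap he fun j => f j
  invFun := extendMap he fun j => (f j).symm
  left_inv r := by
    rw [extendMap_extendMap]
    simpa only [Equiv.symm_comp_self] using extendMap_id he r
  right_inv s := by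
    rw [extendMap_extendMap]
    simpa only [Equiv.self_comp_symm] using extendMap_id he s

end Extend

lemma card_subtype_forall_apply_comp {ι κ α : Type*} [Fintype ι] [Fintype κ] [Fintype α]
    [DecidableEq κ] {e : ι → κ} (he : Injective e) (R : ι → α → Prop)
    [∀ j, DecidablePred (R j)] [Fintype {B : κ → α // ∀ j, R j (B (e j))}] {n : ℕ}
    (hR : ∀ j, Fintype.card {x // R j x} = n) :
    Fintype.card {B : κ → α // ∀ j, R j (B (e j))} =
      n ^ Fintype.card ι * Fintype.card α ^ (Fintype.card κ - Fintype.card ι) := by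
  classical
  set S := Finset.univ.map ⟨e, he⟩
  have hcoord : ∀ i, Fintype.card {x // ∀ j, e j = i → R j x} =
      if i ∈ S then n else Fintype.card α := by
    intro i
    split_ifs with hi
    · obtain ⟨j, -, rfl⟩ := Finset.mem_map.1 hi
      rw [← hR j]
      exact Fintype.card_congr (Equiv.subtypeEquivRight fun x =>
        ⟨fun h => h j rfl, fun h j' hj' => he hj' ▸ h⟩)
    · exact Fintype.card_congr (Equiv.subtypeUnivEquiv fun x j hj =>
        absurd (hj ▸ Finset.mem_map_of_mem _ (Finset.mem_univ j)) hi)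
  calc Fintype.card {B : κ → α // ∀ j, R j (B (e j))}
      = Fintype.card (∀ i, {x // ∀ j, e j = i → R j x}) :=
        Fintype.card_congr ((Equiv.subtypeEquivRight fun B =>
          ⟨fun h i j hj => hj ▸ h j, fun h j => h _ j rfl⟩).trans Equiv.subtypePiEquivPi)
    _ = ∏ i, if i ∈ S then n else Fintype.card α := by
        rw [Fintype.card_pi]
        exact Finset.prod_congr rfl fun i _ => hcoord i
    _ = _ := by
        rw [Finset.prod_ite, Finset.prod_const, Finset.prod_const, Finset.filter_mem_eq_inter,
          Finset.univ_inter, Finset.filter_not, Finset.filter_mem_eq_inter, Finset.univ_inter,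
          Finset.card_univ_sdiff, Finset.card_map, Finset.card_univ]

section Local

variable {ι α : Type*} {n z : ℕ}

noncomputable def enumEquiv (S : ι → Finset α) (hS : ∀ i, (S i).card = n) (Φ : ι → Prop) :
    {p : ι × Fin n // Φ p.1} ≃ {p : ι × α // p.2 ∈ S p.1 ∧ Φ p.1} where
  toFun p := ⟨(p.1.1, (Finset.equivFinOfCardEq (hS p.1.1)).symm p.1.2), Subtype.prop _, p.2⟩
  invFun p := ⟨(p.1.1, Finset.equivFinOfCardEq (hS p.1.1) ⟨p.1.2, p.2.1⟩), p.2.2⟩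
  left_inv p := by simp
  right_inv p := by simp

abbrev Subsets (α : Type*) (z : ℕ) := {A : Finset α // A.card = z}

variable [DecidableEq α]

lemma card_insert_erase {A : Finset α} {x a : α} (hx : x ∈ A) (ha : a ∉ A) :
    (insert a (A.erase x)).card = A.card := by
  rw [Finset.card_insert_of_notMem (fun h => ha (Finset.mem_of_mem_erase h)),
    Finset.card_erase_add_one hx]

variable [Fintype α]

/-- The exchanged element stays marked, so that the exchange can be undone. -/
def exchangeEquiv (a : α) :
    {p : Subsets α z × α // p.2 ∈ p.1.1 ∧ a ∉ p.1.1} ≃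
      {p : Subsets α z × α // p.2 ∈ p.1.1ᶜ ∧ a ∈ p.1.1} where
  toFun p := ⟨(⟨insert a (p.1.1.1.erase p.1.2),
      (card_insert_erase p.2.1 p.2.2).trans p.1.1.2⟩, p.1.2), by
    have := p.2; aesop, Finset.mem_insert_self _ _⟩
  invFun p := ⟨(⟨insert p.1.2 (p.1.1.1.erase a),
      (card_insert_erase p.2.2 (Finset.mem_compl.1 p.2.1)).trans p.1.1.2⟩, p.1.2),
    Finset.mem_insert_self _ _, by have := p.2; aesop⟩
  left_inv p := Subtype.ext <| Prod.ext (Subtype.ext <| by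
    simp [Finset.erase_insert (fun h => p.2.2 (Finset.mem_of_mem_erase h)),
      Finset.insert_erase p.2.1]) rfl
  right_inv p := Subtype.ext <| Prod.ext (Subtype.ext <| by
    simp [Finset.erase_insert (fun h => (Finset.mem_compl.1 p.2.1) (Finset.mem_of_mem_erase h)),
      Finset.insert_erase p.2.2]) rfl

lemma card_subsets_notMem (a : α) :
    Fintype.card {A : Subsets α z // a ∉ A.1} = (Fintype.card α - 1).choose z := by
  rw [Fintype.card_congr (Equiv.subtypeSubtypeEquivSubtypeInter
    (fun A : Finset α => A.card = z) (fun A => a ∉ A)), Fintype.card_subtype]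
  have : (Finset.univ.filter fun A : Finset α => A.card = z ∧ a ∉ A) =
      ({a}ᶜ : Finset α).powersetCard z := by
    ext A
    simp [Finset.mem_powersetCard, Finset.subset_compl_singleton, and_comm]
  rw [this, Finset.card_powersetCard, Finset.card_compl, Finset.card_singleton]

end Local

variable {q z m t : ℕ}

lemma card_compl_subsets (A : Subsets (Fin q) z) : A.1ᶜ.card = q - z := by
  rw [Finset.card_compl, A.2, Fintype.card_fin]

/-- The base array (`m = t = 1`): row `(B, b)` and column `a ∉ B` carry the symbol `(C, c)`,
where `C` is `B` with the element `x` indexed by `b` exchanged for `a`, and `c` indexes `x` in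
`Cᶜ`. -/
noncomputable def baseEquiv (a : Fin q) :
    {p : Subsets (Fin q) z × Fin z // a ∉ p.1.1} ≃
      {p : Subsets (Fin q) z × Fin (q - z) // a ∈ p.1.1} :=
  (enumEquiv Subtype.val Subtype.prop fun A => a ∉ A.1).trans <| (exchangeEquiv a).trans
    (enumEquiv (fun A : Subsets (Fin q) z => A.1ᶜ) card_compl_subsets
      fun A => a ∈ A.1).symm

lemma baseEquiv_fst_subset (a : Fin q) (p : {p : Subsets (Fin q) z × Fin z // a ∉ p.1.1}) :
    (baseEquiv a p).1.1.1 ⊆ insert a p.1.1.1 :=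
  show insert a (Finset.erase _ _) ⊆ _ from
    Finset.insert_subset_insert _ (Finset.erase_subset _ _)

abbrev Row (q z m t : ℕ) := (Fin m → Subsets (Fin q) z) × (Fin t → Fin z)
abbrev Col (q m t : ℕ) := Subsets (Fin m) t × (Fin t → Fin q)
abbrev Sym (q z m t : ℕ) := (Fin m → Subsets (Fin q) z) × (Fin t → Fin (q - z))

noncomputable def coord (T : Subsets (Fin m) t) : Fin t → Fin m := T.1.orderEmbOfFin T.2

lemma coord_injective (T : Subsets (Fin m) t) : Injective (coord T) :=
  (T.1.orderEmbOfFin T.2).injective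

lemma mem_range_coord {T : Subsets (Fin m) t} {i : Fin m} :
    i ∈ Set.range (coord T) ↔ i ∈ T.1 := by
  rw [coord, Finset.range_orderEmbOfFin, Finset.mem_coe]

def Avoids (r : Row q z m t) (k : Col q m t) : Prop := ∀ j, k.2 j ∉ (r.1 (coord k.1 j)).1

def Hits (s : Sym q z m t) (k : Col q m t) : Prop := ∀ j, k.2 j ∈ (s.1 (coord k.1 j)).1

noncomputable instance (k : Col q m t) : DecidablePred (Avoids (z := z) · k) :=
  fun _ => inferInstanceAs (Decidable (∀ _, _))

noncomputable instance (s : Sym q z m t) : DecidablePred (Hits s) :=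
  fun _ => inferInstanceAs (Decidable (∀ _, _))

noncomputable def colEquiv (k : Col q m t) :
    {r : Row q z m t // Avoids r k} ≃ {s : Sym q z m t // Hits s k} :=
  extendEquiv (coord_injective k.1) fun j => baseEquiv (k.2 j)

noncomputable def array (r : Row q z m t) (k : Col q m t) : Option (Sym q z m t) :=
  if h : Avoids r k then some (colEquiv k ⟨r, h⟩).1 else none

lemma array_eq_none {r : Row q z m t} {k : Col q m t} : array r k = none ↔ ¬ Avoids r k := by
  unfold array; split_ifs <;> simpa

lemma array_eq_some {r : Row q z m t} {k : Col q m t} {s : Sym q z m t} :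
    array r k = some s ↔ ∃ h : Hits s k, ((colEquiv k).symm ⟨s, h⟩).1 = r := by
  unfold array
  split_ifs with hr
  · simp only [Option.some.injEq]
    constructor
    · rintro rfl
      exact ⟨(colEquiv k ⟨r, hr⟩).2, by simp⟩
    · rintro ⟨hs, rfl⟩
      simp
  · simp only [false_iff, not_exists]
    rintro hs rfl
    exact hr ((colEquiv k).symm ⟨s, hs⟩).2

lemma colEquiv_fst_apply_of_notMem {k : Col q m t} (r : {r : Row q z m t // Avoids r k})
    {i : Fin m} (hi : i ∉ k.1.1) : (colEquiv k r).1.1 i = r.1.1 i :=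
  extendMap_fst_apply_of_notMem_range _ _ _ (mt mem_range_coord.1 hi)

lemma colEquiv_fst_apply_coord_subset {k : Col q m t} (r : {r : Row q z m t // Avoids r k})
    (j : Fin t) :
    ((colEquiv k r).1.1 (coord k.1 j)).1 ⊆ insert (k.2 j) (r.1.1 (coord k.1 j)).1 := by
  calc _ = (baseEquiv (k.2 j) ⟨_, r.2 j⟩).1.1.1 :=
        congrArg Subtype.val
          (extendMap_fst_apply (coord_injective k.1) (fun j => baseEquiv (k.2 j)) r j)
    _ ⊆ _ := baseEquiv_fst_subset _ _

lemma not_avoids_of_hits {k₁ k₂ : Col q m t} (r : {r : Row q z m t // Avoids r k₁})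
    (hk : k₁ ≠ k₂) (h : Hits (colEquiv k₁ r).1 k₂) : ¬ Avoids r.1 k₂ := by
  intro hr
  obtain ⟨T₁, a₁⟩ := k₁
  obtain ⟨T₂, a₂⟩ := k₂
  by_cases hT : T₁ = T₂
  · subst hT
    obtain ⟨j, hj⟩ : ∃ j, a₁ j ≠ a₂ j := Function.ne_iff.1 fun ha => hk (by rw [ha])
    have := colEquiv_fst_apply_coord_subset r j (h j)
    exact hr j ((Finset.mem_insert.1 this).resolve_left (Ne.symm hj))
  · obtain ⟨i, hi₂, hi₁⟩ : ∃ i ∈ T₂.1, i ∉ T₁.1 :=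
      Finset.not_subset.1 fun hsub =>
        hT (Subtype.ext (Finset.eq_of_subset_of_card_le hsub (by rw [T₁.2, T₂.2])).symm)
    obtain ⟨j, rfl⟩ := mem_range_coord.2 hi₂
    exact hr j (colEquiv_fst_apply_of_notMem r hi₁ ▸ h j)

lemma array_cross {r₁ r₂ : Row q z m t} {k₁ k₂ : Col q m t} {s : Sym q z m t}
    (hne : (r₁, k₁) ≠ (r₂, k₂)) (h₁ : array r₁ k₁ = some s)
    (h₂ : array r₂ k₂ = some s) : array r₁ k₂ = none := by
  obtain ⟨hs₁, rfl⟩ := array_eq_some.1 h₁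
  obtain ⟨hs₂, rfl⟩ := array_eq_some.1 h₂
  have hk : k₁ ≠ k₂ := by
    rintro rfl
    exact hne rfl
  refine array_eq_none.2 (not_avoids_of_hits _ hk ?_)
  rwa [Equiv.apply_symm_apply]

noncomputable def fiberEquiv (s : Sym q z m t) :
    {rk : Row q z m t × Col q m t // array rk.1 rk.2 = some s} ≃ {k // Hits s k} where
  toFun rk := ⟨rk.1.2, (array_eq_some.1 rk.2).1⟩
  invFun k := ⟨(((colEquiv k.1).symm ⟨s, k.2⟩).1, k.1), array_eq_some.2 ⟨k.2, rfl⟩⟩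
  left_inv rk := Subtype.ext (Prod.ext (array_eq_some.1 rk.2).2 rfl)
  right_inv _ := rfl

lemma card_hits (s : Sym q z m t) : Fintype.card {k // Hits s k} = m.choose t * z ^ t := by
  have hT : ∀ T : Subsets (Fin m) t,
      Fintype.card {a : Fin t → Fin q // ∀ j, a j ∈ (s.1 (coord T j)).1} = z ^ t := by
    intro T
    rw [Fintype.card_congr Equiv.subtypePiEquivPi, Fintype.card_pi]
    simp [(s.1 _).2]
  calc Fintype.card {k // Hits s k}
      = Fintype.card (Σ T : Subsets (Fin m) t,
          {a : Fin t → Fin q // ∀ j, a j ∈ (s.1 (coord T j)).1}) :=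
        Fintype.card_congr (Equiv.subtypeProdEquivSigmaSubtype
          fun T (a : Fin t → Fin q) => ∀ j, a j ∈ (s.1 (coord T j)).1)
    _ = m.choose t * z ^ t := by simp [hT, Fintype.card_finset_len]

lemma card_avoids (k : Col q m t) :
    Fintype.card {r : Row q z m t // Avoids r k} =
      (q - 1).choose z ^ t * q.choose z ^ (m - t) * z ^ t := by
  calc Fintype.card {r : Row q z m t // Avoids r k}
      = Fintype.card ({B : Fin m → Subsets (Fin q) z // ∀ j, k.2 j ∉ (B (coord k.1 j)).1} ×
          (Fin t → Fin z)) :=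
        Fintype.card_congr (Equiv.prodSubtypeFstEquivSubtypeProd
          (p := fun B : Fin m → Subsets (Fin q) z => ∀ j, k.2 j ∉ (B (coord k.1 j)).1))
    _ = _ := by
        rw [Fintype.card_prod, card_subtype_forall_apply_comp (coord_injective k.1)
          (fun j (A : Subsets (Fin q) z) => k.2 j ∉ A.1) fun j => card_subsets_notMem (k.2 j)]
        simp [Fintype.card_finset_len]

lemma card_row : Fintype.card (Row q z m t) = z ^ t * q.choose z ^ m := by
  simp [Fintype.card_finset_len, mul_comm]

lemma card_col : Fintype.card (Col q m t) = m.choose t * q ^ t := by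
  simp [Fintype.card_finset_len]

lemma card_sym : Fintype.card (Sym q z m t) = (q - z) ^ t * q.choose z ^ m := by
  simp [Fintype.card_finset_len, mul_comm]

lemma card_array_eq_none (k : Col q m t) :
    Fintype.card {r : Row q z m t // array r k = none} =
      z ^ t * q.choose z ^ m - (q - 1).choose z ^ t * q.choose z ^ (m - t) * z ^ t := by
  rw [Fintype.card_congr (Equiv.subtypeEquivRight fun r => array_eq_none),
    Fintype.card_subtype_compl, card_avoids, card_row]

lemma card_array_eq_some (s : Sym q z m t) :
    Fintype.card {rk : Row q z m t × Col q m t // array rk.1 rk.2 = some s} =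
      m.choose t * z ^ t :=
  (Fintype.card_congr (fiberEquiv s)).trans (card_hits s)

lemma exists_array_eq_some (hz : 0 < z) (htm : t ≤ m) (s : Sym q z m t) :
    ∃ r k, array r k = some s := by
  obtain ⟨⟨rk, h⟩⟩ := Fintype.card_pos_iff.1
    ((card_array_eq_some s).symm ▸ Nat.mul_pos (Nat.choose_pos htm) (pow_pos hz t))
  exact ⟨rk.1, rk.2, h⟩

lemma choose_pred_mul (hq : 0 < q) : (q - 1).choose z * q = q.choose z * (q - z) := by
  have h := Nat.choose_mul_succ_eq (q - 1) z
  rwa [Nat.sub_add_cancel hq] at h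

lemma cast_sub_card_avoids (hzq : z < q) (htm : t ≤ m) :
    ((z ^ t * q.choose z ^ m - (q - 1).choose z ^ t * q.choose z ^ (m - t) * z ^ t : ℕ) : ℚ) =
      (z ^ t * q.choose z ^ m : ℕ) * (1 - (((q : ℚ) - z) / q) ^ t) := by
  have hq : (q : ℚ) ≠ 0 := Nat.cast_ne_zero.2 (by omega)
  obtain ⟨d, rfl⟩ := Nat.exists_eq_add_of_le htm
  have key : ((q - 1).choose z : ℚ) ^ t * q ^ t = (q.choose z : ℚ) ^ t * (q - z) ^ t := by
    rw [← mul_pow, ← mul_pow, ← Nat.cast_sub hzq.le]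
    exact_mod_cast congrArg (· ^ t) (choose_pred_mul (z := z) (by omega))
  have hle : (q - 1).choose z ^ t * q.choose z ^ d * z ^ t ≤ z ^ t * q.choose z ^ (t + d) :=
    calc _ ≤ q.choose z ^ t * q.choose z ^ d * z ^ t := by
          gcongr
          exact Nat.sub_le q 1
      _ = _ := by ring
  rw [Nat.add_sub_cancel_left, Nat.cast_sub hle]
  push_cast
  rw [div_pow]
  field_simp
  linear_combination -(z : ℚ) ^ t * (q.choose z : ℚ) ^ d * key

end SchemeA

theorem scheme_A_general (q z m t : ℕ) (hz : 0 < z) (hzq : z < q)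
    (htm : t ≤ m) :
    ∃ Z : ℕ,
      (Z : ℚ) = (z ^ t * (Nat.choose q z) ^ m : ℕ) *
        (1 - (((q : ℚ) - (z : ℚ)) / (q : ℚ)) ^ t) ∧
      ∃ P : Fin (z ^ t * (Nat.choose q z) ^ m) →
          Fin (Nat.choose m t * q ^ t) →
          Option (Fin ((q - z) ^ t * (Nat.choose q z) ^ m)),
        IsPDA Z P ∧ PDARegular (Nat.choose m t * z ^ t) P := by
  open SchemeA in
  exact ⟨_, cast_sub_card_avoids hzq htm,
    reindex array (Fintype.equivFinOfCardEq card_row).symm (Fintype.equivFinOfCardEq card_col).symm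
      (Fintype.equivFinOfCardEq card_sym).symm,
    isPDA_reindex card_array_eq_none (exists_array_eq_some hz htm) fun _ _ _ _ _ => array_cross,
    pdaRegular_reindex card_array_eq_some⟩

/-- Scheme A: for positive integers z < q and t ≤ m there is a
    C(m,t)z^t-regular PDA with parameters
    (C(m,t)q^t, z^tC(q,z)^m, z^tC(q,z)^m(1−((q−z)/q)^t), (q−z)^tC(q,z)^m). -/
theorem scheme_A (q z m t : ℕ) (hz : 0 < z) (hzq : z < q)
    (ht : 0 < t) (htm : t ≤ m) :
    ∃ Z : ℕ,
      (Z : ℚ) = (z ^ t * (Nat.choose q z) ^ m : ℕ) *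
        (1 - (((q : ℚ) - (z : ℚ)) / (q : ℚ)) ^ t) ∧
      ∃ P : Fin (z ^ t * (Nat.choose q z) ^ m) →
          Fin (Nat.choose m t * q ^ t) →
          Option (Fin ((q - z) ^ t * (Nat.choose q z) ^ m)),
        IsPDA Z P ∧ PDARegular (Nat.choose m t * z ^ t) P :=
  scheme_A_general q z m t hz hzq htm
end

section
/- For all positive integers q, z, m, t with z < q and t ≤ m, there exists a C(m,t)·z^t-regular PDA with parameters (C(m,t)·C(q,z)^t, z^t·q^m, z^t·q^m·(1 − ((q−z)/q)^t), q^m·C(q−1,z)^t). -/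
open Finset

namespace SchemeB

variable {n z m t : ℕ}

abbrev Row (n z m t : ℕ) := (Fin t → Fin z) × (Fin m → Fin (n+1))
abbrev Col (n z m t : ℕ) :=
  {T : Finset (Fin m) // T.card = t} × (Fin t → {B : Finset (Fin (n+1)) // B.card = z})
abbrev Sym (n z m t : ℕ) := (Fin m → Fin (n+1)) × (Fin t → {E : Finset (Fin n) // E.card = z})

/-- the `j`-th element of the `t`-subset `T`. -/
def tmem (T : {T : Finset (Fin m) // T.card = t}) (j : Fin t) : Fin m :=
  T.1.orderEmbOfFin T.2 j

lemma tmem_mem (T : {T : Finset (Fin m) // T.card = t}) (j : Fin t) : tmem T j ∈ T.1 :=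
  Finset.orderEmbOfFin_mem _ _ _

lemma tmem_inj (T : {T : Finset (Fin m) // T.card = t}) : Function.Injective (tmem T) :=
  (T.1.orderEmbOfFin T.2).injective

/-- the index of `i ∈ T` among the elements of `T`. -/
def idxOf (T : {T : Finset (Fin m) // T.card = t}) (i : Fin m) (hi : i ∈ T.1) : Fin t :=
  (T.1.orderIsoOfFin T.2).symm ⟨i, hi⟩

lemma tmem_idxOf (T : {T : Finset (Fin m) // T.card = t}) (i : Fin m) (hi : i ∈ T.1) :
    tmem T (idxOf T i hi) = i := by
  have := (T.1.orderIsoOfFin T.2).apply_symm_apply ⟨i, hi⟩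
  simpa [tmem, idxOf, ← Finset.coe_orderIsoOfFin_apply] using congrArg Subtype.val this

lemma idxOf_tmem (T : {T : Finset (Fin m) // T.card = t}) (j : Fin t)
    (h : tmem T j ∈ T.1) : idxOf T (tmem T j) h = j := by
  have : (⟨tmem T j, h⟩ : {x // x ∈ T.1}) = T.1.orderIsoOfFin T.2 j := by
    apply Subtype.ext; simp [tmem, ← Finset.coe_orderIsoOfFin_apply]
  rw [idxOf, this, OrderIso.symm_apply_apply]

lemma exists_tmem (T : {T : Finset (Fin m) // T.card = t}) {i : Fin m} (hi : i ∈ T.1) :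
    ∃ j, tmem T j = i := ⟨idxOf T i hi, tmem_idxOf T i hi⟩

/-- decode: z-subsets of `Fin n` into z-subsets of `Fin (n+1)` avoiding `x`. -/
def decode (x : Fin (n+1)) (E : Finset (Fin n)) : Finset (Fin (n+1)) := E.map x.succAboveEmb

def encode (x : Fin (n+1)) (A : Finset (Fin (n+1))) : Finset (Fin n) :=
  univ.filter (fun e => x.succAbove e ∈ A)

@[simp] lemma card_decode (x : Fin (n+1)) (E : Finset (Fin n)) :
    (decode x E).card = E.card := Finset.card_map _

lemma notMem_decode (x : Fin (n+1)) (E : Finset (Fin n)) : x ∉ decode x E := by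
  simp only [decode, Finset.mem_map, not_exists]
  rintro e ⟨-, he⟩
  exact Fin.succAbove_ne x e he

lemma mem_decode {x y : Fin (n+1)} {E : Finset (Fin n)} :
    y ∈ decode x E ↔ ∃ e ∈ E, x.succAbove e = y := by simp [decode]

lemma decode_encode {x : Fin (n+1)} {A : Finset (Fin (n+1))} (hx : x ∉ A) :
    decode x (encode x A) = A := by
  ext y
  simp only [mem_decode, encode, mem_filter, mem_univ, true_and]
  constructor
  · rintro ⟨e, he, rfl⟩; exact he
  · intro hy
    have hxy : y ≠ x := by rintro rfl; exact hx hy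
    obtain ⟨e, he⟩ := Fin.exists_succAbove_eq hxy
    exact ⟨e, he ▸ hy, he⟩

lemma encode_decode (x : Fin (n+1)) (E : Finset (Fin n)) : encode x (decode x E) = E := by
  ext e
  simp only [encode, mem_filter, mem_univ, true_and, mem_decode]
  constructor
  · rintro ⟨e', he', h⟩
    rwa [← Fin.succAbove_right_injective (p := x) h]
  · intro he; exact ⟨e, he, rfl⟩

lemma card_encode {x : Fin (n+1)} {A : Finset (Fin (n+1))} (hx : x ∉ A) :
    (encode x A).card = A.card := by
  rw [← card_decode x (encode x A), decode_encode hx]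


/-- the `δ`-th element of the set `B j` of column `k`. -/
def bOf (k : Col n z m t) (j : Fin t) (d : Fin z) : Fin (n+1) :=
  (k.2 j).1.orderEmbOfFin (k.2 j).2 d

lemma bOf_mem (k : Col n z m t) (j : Fin t) (d : Fin z) : bOf k j d ∈ (k.2 j).1 :=
  Finset.orderEmbOfFin_mem _ _ _

/-- the `c` component of the symbol placed at row `r`, column `k`. -/
def cOf (r : Row n z m t) (k : Col n z m t) : Fin m → Fin (n+1) := fun i =>
  if hi : i ∈ k.1.1 then bOf k (idxOf k.1 i hi) (r.1 (idxOf k.1 i hi)) else r.2 i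

lemma cOf_tmem (r : Row n z m t) (k : Col n z m t) (j : Fin t) :
    cOf r k (tmem k.1 j) = bOf k j (r.1 j) := by
  rw [cOf, dif_pos (tmem_mem k.1 j), idxOf_tmem]

lemma cOf_tmem_mem (r : Row n z m t) (k : Col n z m t) (j : Fin t) :
    cOf r k (tmem k.1 j) ∈ (k.2 j).1 := by
  rw [cOf_tmem]; exact bOf_mem k j (r.1 j)

lemma cOf_notMem (r : Row n z m t) (k : Col n z m t) {i : Fin m} (hi : i ∉ k.1.1) :
    cOf r k i = r.2 i := dif_neg hi

/-- the `E` component (as a plain finset). -/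
def EOf (r : Row n z m t) (k : Col n z m t) (j : Fin t) : Finset (Fin n) :=
  encode (cOf r k (tmem k.1 j))
    (insert (r.2 (tmem k.1 j)) ((k.2 j).1.erase (cOf r k (tmem k.1 j))))

lemma Bp_notMem (r : Row n z m t) (k : Col n z m t) (j : Fin t)
    (h : r.2 (tmem k.1 j) ∉ (k.2 j).1) :
    cOf r k (tmem k.1 j) ∉ insert (r.2 (tmem k.1 j)) ((k.2 j).1.erase (cOf r k (tmem k.1 j))) := by
  simp only [Finset.mem_insert, Finset.mem_erase, not_or]
  refine ⟨fun hc => h ?_, by simp⟩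
  rw [← hc]; exact cOf_tmem_mem r k j

lemma EOf_card (hz : 0 < z) (r : Row n z m t) (k : Col n z m t) (j : Fin t)
    (h : r.2 (tmem k.1 j) ∉ (k.2 j).1) : (EOf r k j).card = z := by
  rw [EOf, card_encode (Bp_notMem r k j h), Finset.card_insert_of_notMem
    (fun hm => h (Finset.erase_subset _ _ hm)),
    Finset.card_erase_of_mem (cOf_tmem_mem r k j), (k.2 j).2]
  omega

/-- the placement delivery array (on structured index types). -/
def P' (hz : 0 < z) (r : Row n z m t) (k : Col n z m t) : Option (Sym n z m t) :=
  if h : ∀ j, r.2 (tmem k.1 j) ∉ (k.2 j).1 then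
    some (cOf r k, fun j => ⟨EOf r k j, EOf_card hz r k j (h j)⟩)
  else none

lemma P'_eq_none_iff {hz : 0 < z} {r : Row n z m t} {k : Col n z m t} :
    P' hz r k = none ↔ ∃ j, r.2 (tmem k.1 j) ∈ (k.2 j).1 := by
  rw [P']
  split_ifs with h
  · simpa using fun j hj => (h j) hj
  · push_neg at h
    simpa using h

lemma P'_eq_some_iff {hz : 0 < z} {r : Row n z m t} {k : Col n z m t} {s : Sym n z m t} :
    P' hz r k = some s ↔ (∀ j, r.2 (tmem k.1 j) ∉ (k.2 j).1) ∧
      s.1 = cOf r k ∧ ∀ j, (s.2 j).1 = EOf r k j := by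
  rw [P']
  split_ifs with h
  · simp only [Option.some_inj]
    constructor
    · rintro rfl
      exact ⟨h, rfl, fun j => rfl⟩
    · rintro ⟨-, h2, h3⟩
      obtain ⟨s1, s2⟩ := s
      simp only [Prod.mk.injEq]
      exact ⟨h2.symm, (funext fun j => Subtype.ext (h3 j)).symm⟩
  · simp only [reduceCtorEq, false_iff]
    tauto


/-- given a symbol `s` and a column support `T`, the set `B'_j`. -/
def Bps (s : Sym n z m t) (T : {T : Finset (Fin m) // T.card = t}) (j : Fin t) :
    Finset (Fin (n+1)) :=
  decode (s.1 (tmem T j)) (s.2 j).1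

lemma Bps_card (s : Sym n z m t) (T : {T : Finset (Fin m) // T.card = t}) (j : Fin t) :
    (Bps s T j).card = z := by
  rw [Bps, card_decode, (s.2 j).2]

lemma c_notMem_Bps (s : Sym n z m t) (T : {T : Finset (Fin m) // T.card = t}) (j : Fin t) :
    s.1 (tmem T j) ∉ Bps s T j := notMem_decode _ _

/-- the `v`-th element of `B'_j`. -/
def alpha (s : Sym n z m t) (T : {T : Finset (Fin m) // T.card = t}) (j : Fin t)
    (v : Fin z) : Fin (n+1) :=
  (Bps s T j).orderEmbOfFin (Bps_card s T j) v

lemma alpha_mem (s : Sym n z m t) (T : {T : Finset (Fin m) // T.card = t}) (j : Fin t)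
    (v : Fin z) : alpha s T j v ∈ Bps s T j := Finset.orderEmbOfFin_mem _ _ _

lemma alpha_ne_c (s : Sym n z m t) (T : {T : Finset (Fin m) // T.card = t}) (j : Fin t)
    (v : Fin z) : alpha s T j v ≠ s.1 (tmem T j) := by
  intro h
  exact c_notMem_Bps s T j (h ▸ alpha_mem s T j v)

lemma alpha_inj (s : Sym n z m t) (T : {T : Finset (Fin m) // T.card = t}) (j : Fin t)
    {v v' : Fin z} (h : alpha s T j v = alpha s T j v') : v = v' :=
  ((Bps s T j).orderEmbOfFin (Bps_card s T j)).injective h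

/-- the row function `a` of an occurrence of symbol `s` indexed by `(T, v)`. -/
def aOf (s : Sym n z m t) (T : {T : Finset (Fin m) // T.card = t}) (v : Fin t → Fin z) :
    Fin m → Fin (n+1) := fun i =>
  if hi : i ∈ T.1 then alpha s T (idxOf T i hi) (v (idxOf T i hi)) else s.1 i

lemma aOf_tmem (s : Sym n z m t) (T : {T : Finset (Fin m) // T.card = t})
    (v : Fin t → Fin z) (j : Fin t) : aOf s T v (tmem T j) = alpha s T j (v j) := by
  rw [aOf, dif_pos (tmem_mem T j), idxOf_tmem]

lemma aOf_notMem (s : Sym n z m t) (T : {T : Finset (Fin m) // T.card = t})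
    (v : Fin t → Fin z) {i : Fin m} (hi : i ∉ T.1) : aOf s T v i = s.1 i := dif_neg hi

/-- the column set `B_j` of an occurrence of symbol `s` indexed by `(T, v)`. -/
def BOf (s : Sym n z m t) (T : {T : Finset (Fin m) // T.card = t}) (v : Fin t → Fin z)
    (j : Fin t) : Finset (Fin (n+1)) :=
  insert (s.1 (tmem T j)) ((Bps s T j).erase (alpha s T j (v j)))

lemma BOf_card (hz : 0 < z) (s : Sym n z m t) (T : {T : Finset (Fin m) // T.card = t})
    (v : Fin t → Fin z) (j : Fin t) : (BOf s T v j).card = z := by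
  rw [BOf, Finset.card_insert_of_notMem
      (fun hm => c_notMem_Bps s T j (Finset.erase_subset _ _ hm)),
    Finset.card_erase_of_mem (alpha_mem s T j (v j)), Bps_card]
  omega

lemma c_mem_BOf (s : Sym n z m t) (T : {T : Finset (Fin m) // T.card = t})
    (v : Fin t → Fin z) (j : Fin t) : s.1 (tmem T j) ∈ BOf s T v j :=
  Finset.mem_insert_self _ _

lemma alpha_notMem_BOf (s : Sym n z m t) (T : {T : Finset (Fin m) // T.card = t})
    (v : Fin t → Fin z) (j : Fin t) : alpha s T j (v j) ∉ BOf s T v j := by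
  simp only [BOf, Finset.mem_insert, Finset.mem_erase, not_or]
  exact ⟨alpha_ne_c s T j (v j), by simp⟩

/-- the star-row index of an occurrence. -/
def deltaOf (hz : 0 < z) (s : Sym n z m t) (T : {T : Finset (Fin m) // T.card = t})
    (v : Fin t → Fin z) (j : Fin t) : Fin z :=
  ((BOf s T v j).orderIsoOfFin (BOf_card hz s T v j)).symm
    ⟨s.1 (tmem T j), c_mem_BOf s T v j⟩

/-- the occurrence of symbol `s` indexed by `(T, v)`. -/
def Phi (hz : 0 < z) (s : Sym n z m t) (T : {T : Finset (Fin m) // T.card = t})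
    (v : Fin t → Fin z) : Row n z m t × Col n z m t :=
  ((deltaOf hz s T v, aOf s T v), (T, fun j => ⟨BOf s T v j, BOf_card hz s T v j⟩))

lemma orderIso_symm_congr {α : Type*} [LinearOrder α] {k : ℕ} {A B : Finset α}
    (h : A = B) (hA : A.card = k) (hB : B.card = k) (y : α) (hyA : y ∈ A) (hyB : y ∈ B) :
    (A.orderIsoOfFin hA).symm ⟨y, hyA⟩ = (B.orderIsoOfFin hB).symm ⟨y, hyB⟩ := by
  subst h; rfl

lemma coe_orderIsoOfFin_symm {α : Type*} [LinearOrder α] {k : ℕ} (A : Finset α)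
    (hA : A.card = k) (y : α) (hy : y ∈ A) :
    A.orderEmbOfFin hA ((A.orderIsoOfFin hA).symm ⟨y, hy⟩) = y := by
  have := (A.orderIsoOfFin hA).apply_symm_apply ⟨y, hy⟩
  simpa [← Finset.coe_orderIsoOfFin_apply] using congrArg Subtype.val this

lemma bOf_Phi (hz : 0 < z) (s : Sym n z m t) (T : {T : Finset (Fin m) // T.card = t})
    (v : Fin t → Fin z) (j : Fin t) :
    bOf (Phi hz s T v).2 j (deltaOf hz s T v j) = s.1 (tmem T j) := by
  rw [bOf, Phi, deltaOf]
  exact coe_orderIsoOfFin_symm _ _ _ _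

/-- forward: `Phi` produces an occurrence of `s`. -/
lemma P'_Phi (hz : 0 < z) (s : Sym n z m t) (T : {T : Finset (Fin m) // T.card = t})
    (v : Fin t → Fin z) :
    P' hz (Phi hz s T v).1 (Phi hz s T v).2 = some s := by
  rw [P'_eq_some_iff]
  have hT : (Phi hz s T v).2.1 = T := rfl
  have hB : ∀ j, ((Phi hz s T v).2.2 j).1 = BOf s T v j := fun j => rfl
  have ha : (Phi hz s T v).1.2 = aOf s T v := rfl
  have hnos : ∀ j, (Phi hz s T v).1.2 (tmem (Phi hz s T v).2.1 j) ∉ ((Phi hz s T v).2.2 j).1 := by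
    intro j
    rw [ha, hB, hT, aOf_tmem]
    exact alpha_notMem_BOf s T v j
  have hc : ∀ j, cOf (Phi hz s T v).1 (Phi hz s T v).2 (tmem T j) = s.1 (tmem T j) := by
    intro j
    have := cOf_tmem (Phi hz s T v).1 (Phi hz s T v).2 j
    rw [hT] at this
    rw [this]
    exact bOf_Phi hz s T v j
  have hceq : cOf (Phi hz s T v).1 (Phi hz s T v).2 = s.1 := by
    funext i
    by_cases hi : i ∈ T.1
    · obtain ⟨j, rfl⟩ := exists_tmem T hi
      exact hc j
    · have h1 : cOf (Phi hz s T v).1 (Phi hz s T v).2 i = (Phi hz s T v).1.2 i :=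
        cOf_notMem _ _ (by rwa [hT])
      rw [h1, ha, aOf_notMem s T v hi]
  refine ⟨hnos, hceq.symm, fun j => ?_⟩
  rw [EOf, hceq]
  have h2 : tmem (Phi hz s T v).2.1 j = tmem T j := rfl
  rw [h2, hB, ha, aOf_tmem]
  have h3 : (BOf s T v j).erase (s.1 (tmem T j)) = (Bps s T j).erase (alpha s T j (v j)) := by
    rw [BOf, Finset.erase_insert]
    intro hm
    exact c_notMem_Bps s T j (Finset.erase_subset _ _ hm)
  rw [h3, Finset.insert_erase (alpha_mem s T j (v j)), Bps, encode_decode]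


lemma orderIsoOfFin_symm_apply_emb {α : Type*} [LinearOrder α] {k : ℕ} (A : Finset α)
    (hA : A.card = k) (d : Fin k) (h : A.orderEmbOfFin hA d ∈ A) :
    (A.orderIsoOfFin hA).symm ⟨A.orderEmbOfFin hA d, h⟩ = d := by
  have : (⟨A.orderEmbOfFin hA d, h⟩ : {x // x ∈ A}) = A.orderIsoOfFin hA d :=
    Subtype.ext (by simp [← Finset.coe_orderIsoOfFin_apply])
  rw [this, OrderIso.symm_apply_apply]

section Backward

variable {hz : 0 < z} {r : Row n z m t} {k : Col n z m t} {s : Sym n z m t}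

lemma Bps_eq (h : P' hz r k = some s) (j : Fin t) :
    Bps s k.1 j =
      insert (r.2 (tmem k.1 j)) ((k.2 j).1.erase (cOf r k (tmem k.1 j))) := by
  obtain ⟨h1, h2, h3⟩ := P'_eq_some_iff.mp h
  rw [Bps, h2, h3, EOf, decode_encode (Bp_notMem r k j (h1 j))]

lemma a_mem_Bps (h : P' hz r k = some s) (j : Fin t) :
    r.2 (tmem k.1 j) ∈ Bps s k.1 j := by
  rw [Bps_eq h j]; exact Finset.mem_insert_self _ _

/-- the `v`-index of an occurrence. -/
def vOf (h : P' hz r k = some s) (j : Fin t) : Fin z :=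
  ((Bps s k.1 j).orderIsoOfFin (Bps_card s k.1 j)).symm
    ⟨r.2 (tmem k.1 j), a_mem_Bps h j⟩

lemma alpha_vOf (h : P' hz r k = some s) (j : Fin t) :
    alpha s k.1 j (vOf h j) = r.2 (tmem k.1 j) := by
  rw [alpha, vOf]
  exact coe_orderIsoOfFin_symm _ _ _ _

lemma Phi_vOf (h : P' hz r k = some s) : Phi hz s k.1 (vOf h) = (r, k) := by
  obtain ⟨h1, h2, h3⟩ := P'_eq_some_iff.mp h
  have haOf : aOf s k.1 (vOf h) = r.2 := by
    funext i
    by_cases hi : i ∈ k.1.1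
    · obtain ⟨j, rfl⟩ := exists_tmem k.1 hi
      rw [aOf_tmem, alpha_vOf h j]
    · rw [aOf_notMem s k.1 (vOf h) hi, h2, cOf_notMem r k hi]
  have hBOf : ∀ j, BOf s k.1 (vOf h) j = (k.2 j).1 := by
    intro j
    rw [BOf, alpha_vOf h j, Bps_eq h j,
      Finset.erase_insert (fun hm => (h1 j) (Finset.erase_subset _ _ hm)), h2,
      Finset.insert_erase (cOf_tmem_mem r k j)]
  have hdel : deltaOf hz s k.1 (vOf h) = r.1 := by
    funext j
    rw [deltaOf]
    have hmem : s.1 (tmem k.1 j) ∈ (k.2 j).1 := by rw [h2]; exact cOf_tmem_mem r k j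
    rw [orderIso_symm_congr (hBOf j) (BOf_card hz s k.1 (vOf h) j) (k.2 j).2 _
      (c_mem_BOf s k.1 (vOf h) j) hmem]
    have hc' : s.1 (tmem k.1 j) = (k.2 j).1.orderEmbOfFin (k.2 j).2 (r.1 j) := by
      rw [h2, cOf_tmem]; rfl
    have : (⟨s.1 (tmem k.1 j), hmem⟩ : {x // x ∈ (k.2 j).1}) =
        ⟨(k.2 j).1.orderEmbOfFin (k.2 j).2 (r.1 j),
          Finset.orderEmbOfFin_mem _ _ _⟩ := Subtype.ext hc'
    rw [this, orderIsoOfFin_symm_apply_emb]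
  have hk2 : (fun j => (⟨BOf s k.1 (vOf h) j, BOf_card hz s k.1 (vOf h) j⟩ :
      {B : Finset (Fin (n+1)) // B.card = z})) = k.2 := by
    funext j; exact Subtype.ext (hBOf j)
  rw [Phi, haOf, hdel, hk2]

lemma vOf_Phi (hz : 0 < z) (s : Sym n z m t) (T : {T : Finset (Fin m) // T.card = t})
    (v : Fin t → Fin z) (j : Fin t) : vOf (P'_Phi hz s T v) j = v j := by
  rw [vOf]
  have hT : (Phi hz s T v).2.1 = T := rfl
  have hmem := a_mem_Bps (P'_Phi hz s T v) j
  have ha : (Phi hz s T v).1.2 (tmem (Phi hz s T v).2.1 j) = alpha s T j (v j) :=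
    aOf_tmem s T v j
  have : (⟨(Phi hz s T v).1.2 (tmem (Phi hz s T v).2.1 j), hmem⟩ :
      {x // x ∈ Bps s (Phi hz s T v).2.1 j}) =
      ⟨(Bps s T j).orderEmbOfFin (Bps_card s T j) (v j),
        Finset.orderEmbOfFin_mem _ _ _⟩ := Subtype.ext ha
  rw [this]
  exact orderIsoOfFin_symm_apply_emb (Bps s T j) (Bps_card s T j) (v j) _

end Backward


/-- the crossing condition for two distinct occurrences of the same symbol. -/
lemma cross_none (hz : 0 < z) (s0 : Sym n z m t)
    (T₁ T₂ : {T : Finset (Fin m) // T.card = t}) (v₁ v₂ : Fin t → Fin z)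
    (hne : (T₁, v₁) ≠ (T₂, v₂)) :
    P' hz (Phi hz s0 T₁ v₁).1 (Phi hz s0 T₂ v₂).2 = none := by
  rw [P'_eq_none_iff]
  show ∃ j, aOf s0 T₁ v₁ (tmem T₂ j) ∈ BOf s0 T₂ v₂ j
  by_cases hT : T₁ = T₂
  · subst hT
    have hv : v₁ ≠ v₂ := fun h => hne (by rw [h])
    obtain ⟨j, hj⟩ := Function.ne_iff.mp hv
    refine ⟨j, ?_⟩
    rw [aOf_tmem]
    apply Finset.mem_insert_of_mem
    exact Finset.mem_erase.mpr ⟨fun h => hj (alpha_inj s0 T₁ j h), alpha_mem s0 T₁ j (v₁ j)⟩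
  · have hsub : ¬ T₂.1 ⊆ T₁.1 := by
      intro hsub
      exact hT (Subtype.ext (Finset.eq_of_subset_of_card_le hsub (by rw [T₁.2, T₂.2])).symm)
    obtain ⟨i, hi₂, hi₁⟩ := Finset.not_subset.mp hsub
    obtain ⟨j, rfl⟩ := exists_tmem T₂ hi₂
    refine ⟨j, ?_⟩
    rw [aOf_notMem s0 T₁ v₁ hi₁]
    exact c_mem_BOf s0 T₂ v₂ j

/-- C2: every symbol occurs. -/
lemma P'_surj (hz : 0 < z) (htm : t ≤ m) (s0 : Sym n z m t) :
    ∃ r k, P' hz r k = some s0 := by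
  obtain ⟨T, -, hT⟩ := Finset.exists_subset_card_eq (s := (univ : Finset (Fin m))) (n := t)
    (by simpa using htm)
  exact ⟨(Phi hz s0 ⟨T, hT⟩ (fun _ => ⟨0, hz⟩)).1, (Phi hz s0 ⟨T, hT⟩ (fun _ => ⟨0, hz⟩)).2,
    P'_Phi hz s0 ⟨T, hT⟩ (fun _ => ⟨0, hz⟩)⟩

/-- C3 for `P'`. -/
lemma P'_cross (hz : 0 < z) (r₁ r₂ : Row n z m t) (k₁ k₂ : Col n z m t) (s0 : Sym n z m t)
    (hne : (r₁, k₁) ≠ (r₂, k₂)) (h₁ : P' hz r₁ k₁ = some s0) (h₂ : P' hz r₂ k₂ = some s0) :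
    P' hz r₁ k₂ = none ∧ P' hz r₂ k₁ = none := by
  have e₁ := Phi_vOf h₁
  have e₂ := Phi_vOf h₂
  have hne' : ((k₁.1, vOf h₁) : _ × _) ≠ (k₂.1, vOf h₂) := by
    intro he
    rw [Prod.mk.injEq] at he
    apply hne
    rw [← e₁, ← e₂, he.1, he.2]
  constructor
  · have := cross_none hz s0 k₁.1 k₂.1 (vOf h₁) (vOf h₂) hne'
    rwa [e₁, e₂] at this
  · have := cross_none hz s0 k₂.1 k₁.1 (vOf h₂) (vOf h₁) (Ne.symm hne')
    rwa [e₁, e₂] at this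

/-- C1: the number of stars in each column. -/
lemma P'_count_none (hz : 0 < z) (htm : t ≤ m) (k : Col n z m t) :
    (univ.filter fun r : Row n z m t => P' hz r k = none).card =
      z ^ t * (n+1) ^ m - z ^ t * ((n+1-z) ^ t * (n+1) ^ (m-t)) := by
  classical
  have hsplit := Finset.card_filter_add_card_filter_not
    (s := (univ : Finset (Row n z m t))) (p := fun r => P' hz r k = none)
  have htot : (univ : Finset (Row n z m t)).card = z ^ t * (n+1) ^ m := by
    simp [Fintype.card_fun]
  -- the non-star set
  have hneg : (univ.filter fun r : Row n z m t => ¬ P' hz r k = none) =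
      (univ : Finset (Fin t → Fin z)) ×ˢ
        (univ.filter fun a : Fin m → Fin (n+1) => ∀ j, a (tmem k.1 j) ∉ (k.2 j).1) := by
    ext r
    simp only [mem_filter, mem_univ, true_and, Finset.mem_product, P'_eq_none_iff, not_exists]
  have hpi : (univ.filter fun a : Fin m → Fin (n+1) => ∀ j, a (tmem k.1 j) ∉ (k.2 j).1) =
      Fintype.piFinset (fun i => if hi : i ∈ k.1.1 then ((k.2 (idxOf k.1 i hi)).1)ᶜ else univ) := by
    ext a
    rw [Fintype.mem_piFinset]
    simp only [mem_filter, mem_univ, true_and]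
    constructor
    · intro h i
      split_ifs with hi
      · rw [Finset.mem_compl]
        have := h (idxOf k.1 i hi)
        rwa [tmem_idxOf] at this
      · exact mem_univ _
    · intro h j
      have := h (tmem k.1 j)
      rw [dif_pos (tmem_mem k.1 j), idxOf_tmem, Finset.mem_compl] at this
      exact this
  have hcards : ∀ i, (if hi : i ∈ k.1.1 then ((k.2 (idxOf k.1 i hi)).1)ᶜ
      else (univ : Finset (Fin (n+1)))).card = if i ∈ k.1.1 then (n+1-z) else (n+1) := by
    intro i
    split_ifs with hi
    · rw [Finset.card_compl, (k.2 (idxOf k.1 i hi)).2, Fintype.card_fin]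
    · simp
  have hprod : ∏ i : Fin m, (if i ∈ k.1.1 then (n+1-z) else (n+1)) =
      (n+1-z) ^ t * (n+1) ^ (m-t) := by
    rw [Finset.prod_ite, Finset.prod_const, Finset.prod_const]
    have h1 : (univ.filter fun i : Fin m => i ∈ k.1.1) = k.1.1 := by
      ext i; simp
    have h2 : (univ.filter fun i : Fin m => i ∈ k.1.1).card +
        (univ.filter fun i : Fin m => ¬ i ∈ k.1.1).card = m := by
      rw [Finset.card_filter_add_card_filter_not]; simp
    rw [h1, k.1.2] at h2 ⊢
    have h3 : (univ.filter fun i : Fin m => ¬ i ∈ k.1.1).card = m - t := by omega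
    rw [h3]
  have hnegcard : (univ.filter fun r : Row n z m t => ¬ P' hz r k = none).card =
      z ^ t * ((n+1-z) ^ t * (n+1) ^ (m-t)) := by
    rw [hneg, Finset.card_product, hpi, Fintype.card_piFinset]
    congr 1
    · simp [Fintype.card_fun]
    · rw [← hprod]
      exact Finset.prod_congr rfl (fun i _ => hcards i)
  rw [htot, hnegcard] at hsplit
  omega

/-- regularity: every symbol occurs exactly `C(m,t) z^t` times. -/
lemma P'_count_some (hz : 0 < z) (s0 : Sym n z m t) :
    (univ.filter fun rk : Row n z m t × Col n z m t =>
      P' hz rk.1 rk.2 = some s0).card = m.choose t * z ^ t := by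
  classical
  have hcard : (univ.filter fun rk : Row n z m t × Col n z m t =>
      P' hz rk.1 rk.2 = some s0).card =
      (univ : Finset ({T : Finset (Fin m) // T.card = t} × (Fin t → Fin z))).card := by
    refine Finset.card_bij'
      (fun rk ha => (rk.2.1, vOf (Finset.mem_filter.mp ha).2))
      (fun Tv _ => Phi hz s0 Tv.1 Tv.2)
      (fun rk ha => mem_univ _)
      (fun Tv _ => Finset.mem_filter.mpr ⟨mem_univ _, P'_Phi hz s0 Tv.1 Tv.2⟩)
      ?_ ?_
    · intro rk ha
      exact (Phi_vOf (Finset.mem_filter.mp ha).2).trans rfl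
    · intro Tv _
      refine Prod.ext rfl (funext fun j => ?_)
      exact vOf_Phi hz s0 Tv.1 Tv.2 j
  rw [hcard, Finset.card_univ, Fintype.card_prod, Fintype.card_finset_len, Fintype.card_fun]
  simp


end SchemeB

set_option synthInstance.maxHeartbeats 1000000 in
theorem scheme_B' (q z m t : ℕ) (hz : 0 < z) (hzq : z < q)
    (ht : 0 < t) (htm : t ≤ m) :
    ∃ Z : ℕ,
      (Z : ℚ) = (z ^ t * q ^ m : ℕ) *
        (1 - (((q : ℚ) - (z : ℚ)) / (q : ℚ)) ^ t) ∧
      ∃ P : Fin (z ^ t * q ^ m) →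
          Fin (Nat.choose m t * (Nat.choose q z) ^ t) →
          Option (Fin (q ^ m * (Nat.choose (q - 1) z) ^ t)),
        IsPDA Z P ∧ PDARegular (Nat.choose m t * z ^ t) P := by
  classical
  obtain ⟨n, rfl⟩ : ∃ n, q = n + 1 := ⟨q - 1, by omega⟩
  refine ⟨z ^ t * (n+1) ^ m - z ^ t * ((n+1-z) ^ t * (n+1) ^ (m-t)), ?_, ?_⟩
  · -- the value of Z
    have hle : z ^ t * ((n+1-z) ^ t * (n+1) ^ (m-t)) ≤ z ^ t * (n+1) ^ m := by
      apply Nat.mul_le_mul_left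
      calc (n+1-z) ^ t * (n+1) ^ (m-t) ≤ (n+1) ^ t * (n+1) ^ (m-t) := by
            apply Nat.mul_le_mul_right
            exact Nat.pow_le_pow_left (by omega) t
        _ = (n+1) ^ m := by rw [← pow_add]; congr 1; omega
    have hq0 : ((n : ℚ) + 1) ≠ 0 := by positivity
    have hsub : ((n + 1 - z : ℕ) : ℚ) = ((n:ℚ) + 1) - z := by
      have : z ≤ n + 1 := by omega
      push_cast [this]
      ring
    rw [Nat.cast_sub hle]
    push_cast [hsub]
    have hm : ((n:ℚ)+1) ^ m = ((n:ℚ)+1) ^ t * ((n:ℚ)+1) ^ (m-t) := by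
      rw [← pow_add]; congr 1; omega
    have key : (z:ℚ) ^ t * ((n:ℚ)+1) ^ m * ((((n:ℚ)+1) - z) / ((n:ℚ)+1)) ^ t =
        (z:ℚ) ^ t * ((((n:ℚ)+1) - z) ^ t * ((n:ℚ)+1) ^ (m-t)) := by
      rw [div_pow, hm]
      field_simp
    rw [mul_sub, mul_one, key]
  · -- the PDA
    have hcR : Fintype.card (SchemeB.Row n z m t) = z ^ t * (n+1) ^ m := by
      simp [Fintype.card_fun]
    have hcC : Fintype.card (SchemeB.Col n z m t) =
        Nat.choose m t * (Nat.choose (n+1) z) ^ t := by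
      simp [Fintype.card_fun]
    have hcS : Fintype.card (SchemeB.Sym n z m t) =
        (n+1) ^ m * (Nat.choose (n+1-1) z) ^ t := by
      simp [Fintype.card_fun]
    let eR : Fin (z ^ t * (n+1) ^ m) ≃ SchemeB.Row n z m t :=
      (Fintype.equivFinOfCardEq hcR).symm
    let eC : Fin (Nat.choose m t * (Nat.choose (n+1) z) ^ t) ≃ SchemeB.Col n z m t :=
      (Fintype.equivFinOfCardEq hcC).symm
    let eS : SchemeB.Sym n z m t ≃ Fin ((n+1) ^ m * (Nat.choose (n+1-1) z) ^ t) :=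
      Fintype.equivFinOfCardEq hcS
    refine ⟨fun j k => (SchemeB.P' hz (eR j) (eC k)).map eS, ⟨?_, ?_, ?_⟩, ?_⟩
    · -- C1
      intro k
      have hcong : ∀ j, ((SchemeB.P' hz (eR j) (eC k)).map eS = none ↔
          SchemeB.P' hz (eR j) (eC k) = none) := by
        intro j; simp
      rw [Finset.card_equiv eR (t := univ.filter fun r : SchemeB.Row n z m t =>
          SchemeB.P' hz r (eC k) = none) (fun j => by
        simp only [mem_filter, mem_univ, true_and]; exact hcong j)]
      exact SchemeB.P'_count_none hz htm (eC k)
    · -- C2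
      intro s
      obtain ⟨r, k, h⟩ := SchemeB.P'_surj hz htm (eS.symm s)
      refine ⟨eR.symm r, eC.symm k, ?_⟩
      show (SchemeB.P' hz (eR (eR.symm r)) (eC (eC.symm k))).map eS = some s
      rw [Equiv.apply_symm_apply, Equiv.apply_symm_apply, h, Option.map_some,
        Equiv.apply_symm_apply]
    · -- C3
      intro j₁ j₂ k₁ k₂ s hne h₁ h₂
      rw [Option.map_eq_some_iff] at h₁ h₂
      obtain ⟨a₁, hp₁, ha₁⟩ := h₁
      obtain ⟨a₂, hp₂, ha₂⟩ := h₂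
      have haa : a₂ = a₁ := eS.injective (by rw [ha₁, ha₂])
      subst haa
      have hne' : ((eR j₁, eC k₁) : _ × _) ≠ (eR j₂, eC k₂) := by
        intro he
        rw [Prod.mk.injEq] at he
        exact hne (by rw [Prod.mk.injEq]; exact ⟨eR.injective he.1, eC.injective he.2⟩)
      obtain ⟨hc₁, hc₂⟩ := SchemeB.P'_cross hz (eR j₁) (eR j₂) (eC k₁) (eC k₂) a₂ hne' hp₁ hp₂
      constructor
      · show (SchemeB.P' hz (eR j₁) (eC k₂)).map eS = none
        rw [hc₁]; rfl
      · show (SchemeB.P' hz (eR j₂) (eC k₁)).map eS = none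
        rw [hc₂]; rfl
    · -- regularity
      intro s
      have hmap : ∀ (x : Option (SchemeB.Sym n z m t)),
          x.map eS = some s ↔ x = some (eS.symm s) := by
        intro x
        cases x with
        | none => simp
        | some a => simp [Equiv.apply_eq_iff_eq_symm_apply]
      rw [Finset.card_equiv (Equiv.prodCongr eR eC)
        (t := univ.filter fun rk : SchemeB.Row n z m t × SchemeB.Col n z m t =>
          SchemeB.P' hz rk.1 rk.2 = some (eS.symm s)) (fun jk => by
        simp only [mem_filter, mem_univ, true_and, Equiv.prodCongr_apply]
        exact hmap _)]
      exact SchemeB.P'_count_some hz (eS.symm s)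

/-- Scheme B: for positive integers z < q and t ≤ m there is a
    C(m,t)z^t-regular PDA with parameters
    (C(m,t)C(q,z)^t, z^tq^m, z^tq^m(1−((q−z)/q)^t), q^mC(q−1,z)^t). -/
theorem scheme_B (q z m t : ℕ) (hz : 0 < z) (hzq : z < q)
    (ht : 0 < t) (htm : t ≤ m) :
    ∃ Z : ℕ,
      (Z : ℚ) = (z ^ t * q ^ m : ℕ) *
        (1 - (((q : ℚ) - (z : ℚ)) / (q : ℚ)) ^ t) ∧
      ∃ P : Fin (z ^ t * q ^ m) →
          Fin (Nat.choose m t * (Nat.choose q z) ^ t) →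
          Option (Fin (q ^ m * (Nat.choose (q - 1) z) ^ t)),
        IsPDA Z P ∧ PDARegular (Nat.choose m t * z ^ t) P := by
  exact scheme_B' q z m t hz hzq ht htm
end

section
/- For all positive integers q, m, t with q ≥ 2 and t ≤ m, there exists a C(m,t)·2^t-regular PDA with parameters (C(m,t)·q^{2t}, 2^m·q^m, 2^m·q^m·(1 − ((q−1)/q)^t), 2^{m−t}·(q−1)^t·q^{m+t}). -/
/-!
The base array has rows `Bool × Fin q`, columns `Fin q × Fin q` and labels `(s, {x, y})` with `s`
a row and `{x, y}` a 2-subset of `Fin q`; a label fills the two cells given by the two orientations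
of `{x, y}`, both in columns where the row `s` is starred. Scheme C works on `m` coordinates: a
column is a `t`-subset `T` with a base column at each coordinate of `T`, and the label `(u, π)` is
placed, for every `T` and every orientation vector `ε`, in the cell whose row is `u` off `T` and
whose coordinates on `T` are the base cells of `(u i, π j)` oriented by `ε`. Two cells of one label
cross at stars: for equal subsets by the base condition at a coordinate where the orientations
differ, and for `T ≠ T'` because at a coordinate `i ∈ T' \ T` the first row is still `u i`, which
is starred in the second column. Counting then gives the parameters.
-/

open Finset

namespace SchemeC

variable {R C L X : Type}

/-- An array presented by its label classes: the cell `enc l x` carries the label `l`, and the stars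
are exactly the cells of no class. -/
structure IsPDAEncoding (star : R → C → Prop) (enc : L → X → R × C) : Prop where
  injective : Function.Injective (Function.uncurry enc)
  not_star_iff : ∀ r c, ¬ star r c ↔ ∃ l x, enc l x = (r, c)
  star_cross : ∀ l {x x'}, x ≠ x' → star (enc l x).1 (enc l x').2

open Classical in
noncomputable def labelAt (enc : L → X → R × C) (r : R) (c : C) : Option L :=
  if h : ∃ l x, enc l x = (r, c) then some h.choose else none

namespace IsPDAEncoding

variable {star : R → C → Prop} {enc : L → X → R × C}

lemma labelAt_eq_none_iff (h : IsPDAEncoding star enc) {r : R} {c : C} :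
    labelAt enc r c = none ↔ star r c := by
  rw [← not_iff_not, h.not_star_iff, labelAt]
  split_ifs with hex <;> simp [hex]

lemma labelAt_eq_some_iff (h : IsPDAEncoding star enc) {r : R} {c : C} {l : L} :
    labelAt enc r c = some l ↔ ∃ x, enc l x = (r, c) := by
  rw [labelAt]
  split_ifs with hex
  · obtain ⟨x, hx⟩ := hex.choose_spec
    refine ⟨?_, fun ⟨x', hx'⟩ => ?_⟩
    · rintro ⟨⟩; exact ⟨x, hx⟩
    · have := @h.injective (_, x) (l, x') (hx.trans hx'.symm)
      exact congrArg some (Prod.mk.inj this).1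
  · simp only [false_iff]
    rintro ⟨x, hx⟩
    exact hex ⟨l, x, hx⟩

theorem exists_isPDA_pdaRegular [Fintype R] [Fintype C] [Fintype L] [Fintype X] [Nonempty X]
    [DecidableRel star] (h : IsPDAEncoding star enc) {F K S Z : ℕ}
    (hF : Fintype.card R = F) (hK : Fintype.card C = K) (hS : Fintype.card L = S)
    (hZ : ∀ c, #{r | star r c} = Z) :
    ∃ P : Fin F → Fin K → Option (Fin S), IsPDA Z P ∧ PDARegular (Fintype.card X) P := by
  let eR : Fin F ≃ R := (Fintype.equivFinOfCardEq hF).symm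
  let eC : Fin K ≃ C := (Fintype.equivFinOfCardEq hK).symm
  let eL : Fin S ≃ L := (Fintype.equivFinOfCardEq hS).symm
  let P j k := (labelAt enc (eR j) (eC k)).map eL.symm
  have none_iff (j k) : P j k = none ↔ star (eR j) (eC k) := by
    simp only [P, Option.map_eq_none_iff, h.labelAt_eq_none_iff]
  have some_iff (j k s) : P j k = some s ↔ ∃ x, enc (eL s) x = (eR j, eC k) := by
    simp only [P, Option.map_eq_some_iff, Equiv.symm_apply_eq, exists_eq_right,
      h.labelAt_eq_some_iff]
  have cell_eq (s x) : P (eR.symm (enc (eL s) x).1) (eC.symm (enc (eL s) x).2) = some s :=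
    (some_iff _ _ _).2 ⟨x, by simp⟩
  refine ⟨P, ⟨fun k => ?_, fun s => ?_, ?_⟩, fun s => ?_⟩
  · rw [← hZ (eC k)]
    exact card_equiv eR (by simp [none_iff])
  · obtain ⟨x⟩ := ‹Nonempty X›
    exact ⟨_, _, cell_eq s x⟩
  · intro j₁ j₂ k₁ k₂ s hne h₁ h₂
    obtain ⟨x₁, hx₁⟩ := (some_iff _ _ _).1 h₁
    obtain ⟨x₂, hx₂⟩ := (some_iff _ _ _).1 h₂
    have hx : x₁ ≠ x₂ := by
      rintro rfl
      rw [hx₁, Prod.mk.injEq, eR.apply_eq_iff_eq, eC.apply_eq_iff_eq] at hx₂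
      exact hne (Prod.ext hx₂.1 hx₂.2)
    have cross := h.star_cross (eL s) hx
    have cross' := h.star_cross (eL s) hx.symm
    rw [hx₁, hx₂] at cross cross'
    exact ⟨(none_iff _ _).2 cross, (none_iff _ _).2 cross'⟩
  · let cell x := (eR.symm (enc (eL s) x).1, eC.symm (enc (eL s) x).2)
    have hcell : Function.Injective cell := fun x x' hxx' => by
      have := @h.injective (eL s, x) (eL s, x')
      simp_all [cell, Prod.ext_iff]
    have : ({jk | P jk.1 jk.2 = some s} : Finset _) = univ.image cell := by
      ext ⟨j, k⟩
      simp [some_iff, cell, Prod.ext_iff, Equiv.symm_apply_eq]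
    rw [this, card_image_of_injective _ hcell, card_univ]

end IsPDAEncoding

section Product

variable {Rb Cb Pb Xb : Type} {m t : ℕ}

abbrev Subsets (m t : ℕ) := {T : Finset (Fin m) // #T = t}

def Subsets.emb (T : Subsets m t) : Fin t → Fin m := T.1.orderEmbOfFin T.2

lemma Subsets.emb_injective (T : Subsets m t) : Function.Injective T.emb :=
  (T.1.orderEmbOfFin T.2).injective

lemma Subsets.exists_emb_eq_iff (T : Subsets m t) {i : Fin m} :
    (∃ j, T.emb j = i) ↔ i ∈ T.1 := by
  rw [← Set.mem_range, emb, range_orderEmbOfFin, mem_coe]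

lemma Subsets.exists_forall_emb_ne {T T' : Subsets m t} (h : T ≠ T') :
    ∃ j', ∀ j, T.emb j ≠ T'.emb j' := by
  by_contra! hsub
  refine h.symm (Subtype.ext (eq_of_subset_of_card_le (fun i hi => ?_) (by rw [T.2, T'.2])))
  obtain ⟨j', rfl⟩ := T'.exists_emb_eq_iff.2 hi
  exact T.exists_emb_eq_iff.1 (hsub j')

def prodStar (star : Rb → Cb → Prop) (r : Fin m → Rb) (k : Subsets m t × (Fin t → Cb)) :
    Prop :=
  ∃ j, star (r (k.1.emb j)) (k.2 j)

instance {star : Rb → Cb → Prop} [DecidableRel star] :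
    DecidableRel (prodStar (m := m) (t := t) star) :=
  fun _ _ => inferInstanceAs (Decidable (∃ _, _))

noncomputable def prodEnc (enc : Rb × Pb → Xb → Rb × Cb)
    (l : (Fin m → Rb) × (Fin t → Pb)) (x : Subsets m t × (Fin t → Xb)) :
    (Fin m → Rb) × (Subsets m t × (Fin t → Cb)) :=
  (Function.extend x.1.emb (fun j => (enc (l.1 (x.1.emb j), l.2 j) (x.2 j)).1) l.1,
    x.1, fun j => (enc (l.1 (x.1.emb j), l.2 j) (x.2 j)).2)

variable {star : Rb → Cb → Prop} {enc : Rb × Pb → Xb → Rb × Cb}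

lemma prodEnc_fst_emb (l : (Fin m → Rb) × (Fin t → Pb)) (x : Subsets m t × (Fin t → Xb))
    (j : Fin t) : (prodEnc enc l x).1 (x.1.emb j) = (enc (l.1 (x.1.emb j), l.2 j) (x.2 j)).1 :=
  x.1.emb_injective.extend_apply (fun j => (enc (l.1 (x.1.emb j), l.2 j) (x.2 j)).1) l.1 j

lemma prodEnc_fst_of_forall_ne (l : (Fin m → Rb) × (Fin t → Pb))
    {x : Subsets m t × (Fin t → Xb)} {i : Fin m} (hi : ∀ j, x.1.emb j ≠ i) :
    (prodEnc enc l x).1 i = l.1 i :=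
  Function.extend_apply' (fun j => (enc (l.1 (x.1.emb j), l.2 j) (x.2 j)).1) l.1 i
    fun ⟨j, hj⟩ => hi j hj

lemma prodEnc_coord (l : (Fin m → Rb) × (Fin t → Pb)) (x : Subsets m t × (Fin t → Xb))
    (j : Fin t) :
    ((prodEnc enc l x).1 (x.1.emb j), (prodEnc enc l x).2.2 j)
      = enc (l.1 (x.1.emb j), l.2 j) (x.2 j) := by
  rw [prodEnc_fst_emb]
  rfl

theorem IsPDAEncoding.prod (h : IsPDAEncoding star enc)
    (star_label : ∀ l x, star l.1 (enc l x).2) :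
    IsPDAEncoding (prodStar (m := m) (t := t) star) (prodEnc enc) where
  injective := by
    rintro ⟨l, T, ε⟩ ⟨l', T', ε'⟩ hEq
    simp only [Function.uncurry_apply_pair] at hEq
    obtain rfl : T = T' := congrArg (·.2.1) hEq
    have coord j := Prod.mk.inj <| @h.injective (_, ε j) (_, ε' j) <| by
      simp only [Function.uncurry_apply_pair]
      rw [← prodEnc_coord (enc := enc) l (T, ε), ← prodEnc_coord (enc := enc) l' (T, ε'), hEq]
    have hl₁ : l.1 = l'.1 := funext fun i => by
      by_cases hi : ∃ j, T.emb j = i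
      · obtain ⟨j, rfl⟩ := hi
        exact (Prod.mk.inj (coord j).1).1
      · rw [not_exists] at hi
        rw [← prodEnc_fst_of_forall_ne (enc := enc) l (x := (T, ε)) hi, hEq,
          prodEnc_fst_of_forall_ne l' (x := (T, ε')) hi]
    have hl₂ : l.2 = l'.2 := funext fun j => (Prod.mk.inj (coord j).1).2
    have hε : ε = ε' := funext fun j => (coord j).2
    rw [Prod.ext hl₁ hl₂, hε]
  not_star_iff := by
    rintro r ⟨T, κ⟩
    simp only [prodStar, not_exists]
    constructor
    · intro hns
      choose l x hlx using fun j => (h.not_star_iff _ _).1 (hns j)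
      let u := Function.extend T.emb (fun j => (l j).1) r
      have hl j : (u (T.emb j), (l j).2) = l j := by simp [u, T.emb_injective.extend_apply]
      refine ⟨(u, fun j => (l j).2), (T, x), Prod.ext (funext fun i => ?_) (Prod.ext rfl ?_)⟩
      · by_cases hi : ∃ j, T.emb j = i
        · obtain ⟨j, rfl⟩ := hi
          rw [prodEnc_fst_emb]
          simp only [hl, hlx]
        · rw [not_exists] at hi
          rw [prodEnc_fst_of_forall_ne (x := (T, x)) _ hi]
          show u i = r i
          exact Function.extend_apply' _ _ _ fun ⟨j, hj⟩ => hi j hj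
      · funext j
        simp only [prodEnc, hl, hlx]
    · rintro ⟨l, x, hlx⟩ j
      simp only [Prod.ext_iff] at hlx
      obtain ⟨rfl, rfl, rfl⟩ := hlx
      exact (h.not_star_iff _ _).2 ⟨_, _, (prodEnc_coord l x j).symm⟩
  star_cross := by
    rintro l ⟨T, ε⟩ ⟨T', ε'⟩ hne
    by_cases hT : T = T'
    · subst hT
      obtain ⟨j, hj⟩ := Function.ne_iff.1 fun h : ε = ε' => hne (h ▸ rfl)
      refine ⟨j, ?_⟩
      show star ((prodEnc enc l (T, ε)).1 (T.emb j)) (enc (l.1 (T.emb j), l.2 j) (ε' j)).2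
      rw [prodEnc_fst_emb (x := (T, ε))]
      exact h.star_cross _ hj
    · obtain ⟨j', hj'⟩ := Subsets.exists_forall_emb_ne hT
      refine ⟨j', ?_⟩
      show star ((prodEnc enc l (T, ε)).1 (T'.emb j')) (enc (l.1 (T'.emb j'), l.2 j') (ε' j')).2
      rw [prodEnc_fst_of_forall_ne (x := (T, ε)) l hj']
      exact star_label (l.1 (T'.emb j'), l.2 j') (ε' j')

theorem card_filter_prodStar [Fintype Rb] [DecidableRel star] {N : ℕ}
    (hN : ∀ c, #{a | ¬ star a c} = N) (k : Subsets m t × (Fin t → Cb)) :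
    #{r | prodStar star r k} = Fintype.card Rb ^ m - N ^ t * Fintype.card Rb ^ (m - t) := by
  let A : Fin m → Finset Rb :=
    Function.extend k.1.emb (fun j => ({a | ¬ star a (k.2 j)} : Finset Rb)) fun _ => univ
  have hA : ({r | ¬ prodStar star r k} : Finset _) = Fintype.piFinset A := by
    ext r
    simp only [mem_filter, mem_univ, true_and, Fintype.mem_piFinset, prodStar, not_exists]
    refine ⟨fun hr i => ?_, fun hr j => ?_⟩
    · by_cases hi : ∃ j, k.1.emb j = i
      · obtain ⟨j, rfl⟩ := hi
        simp [A, k.1.emb_injective.extend_apply, hr j]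
      · simp [A, Function.extend_apply' _ _ _ hi]
    · simpa [A, k.1.emb_injective.extend_apply] using hr (k.1.emb j)
  have hcard_mem : ∀ i ∈ k.1.1, #(A i) = N := fun i hi => by
    obtain ⟨j, rfl⟩ := k.1.exists_emb_eq_iff.2 hi
    simp [A, k.1.emb_injective.extend_apply, hN]
  have hcard_not_mem : ∀ i ∈ k.1.1ᶜ, #(A i) = Fintype.card Rb := fun i hi => by
    rw [mem_compl, ← k.1.exists_emb_eq_iff] at hi
    simp [A, Function.extend_apply' _ _ _ hi]
  have hnot : #{r | ¬ prodStar star r k} = N ^ t * Fintype.card Rb ^ (m - t) := by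
    rw [hA, Fintype.card_piFinset, ← prod_mul_prod_compl k.1.1, prod_congr rfl hcard_mem,
      prod_congr rfl hcard_not_mem, prod_const, prod_const, card_compl, k.1.2, Fintype.card_fin]
  have := card_filter_add_card_filter_not (s := univ) (prodStar star · k)
  rw [hnot, card_univ, Fintype.card_fun, Fintype.card_fin] at this
  omega

end Product

section Base

variable {q : ℕ}

abbrev Pairs (q : ℕ) := {p : Fin q × Fin q // p.1 < p.2}

def Pairs.orient (p : Pairs q) (b : Bool) : Fin q × Fin q := if b then p.1.swap else p.1

lemma Pairs.orient_not (p : Pairs q) (b : Bool) : p.orient (!b) = (p.orient b).swap := by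
  cases b <;> simp [orient]

lemma Pairs.orient_fst_ne_snd (p : Pairs q) (b : Bool) : (p.orient b).1 ≠ (p.orient b).2 := by
  cases b <;> simp [orient, p.2.ne, p.2.ne']

def Pairs.orientEquiv : Pairs q × Bool ≃ (univ : Finset (Fin q)).offDiag where
  toFun pb := ⟨pb.1.orient pb.2, by simpa using pb.1.orient_fst_ne_snd pb.2⟩
  invFun v :=
    if h : v.1.1 < v.1.2 then (⟨v.1, h⟩, false)
    else (⟨v.1.swap, lt_of_le_of_ne (not_lt.1 h) (mem_offDiag.1 v.2).2.2.symm⟩, true)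
  left_inv := by
    rintro ⟨p, _ | _⟩
    · simp [orient, p.2]
    · simp [orient, p.2.not_gt]
  right_inv := by
    rintro ⟨⟨x, y⟩, hxy⟩
    by_cases h : x < y <;> simp [orient, h]

lemma Pairs.two_mul_card : 2 * Fintype.card (Pairs q) = q * (q - 1) := by
  have := Fintype.card_congr (Pairs.orientEquiv (q := q))
  rw [Fintype.card_prod, Fintype.card_bool, Fintype.card_coe, offDiag_card, card_univ,
    Fintype.card_fin] at this
  rw [Nat.mul_sub_one, ← this, mul_comm]

def baseStar (r : Bool × Fin q) (c : Fin q × Fin q) : Prop := r.2 = if r.1 then c.2 else c.1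

instance : DecidableRel (baseStar (q := q)) := fun _ _ => inferInstanceAs (Decidable (_ = _))

def baseEnc (l : (Bool × Fin q) × Pairs q) (b : Bool) : (Bool × Fin q) × (Fin q × Fin q) :=
  let xy := l.2.orient b
  ((!l.1.1, xy.1), if l.1.1 then (xy.2, l.1.2) else (l.1.2, xy.2))

lemma baseStar_baseEnc (l : (Bool × Fin q) × Pairs q) (b : Bool) :
    baseStar l.1 (baseEnc l b).2 := by
  rcases l with ⟨⟨_ | _, ρ⟩, p⟩ <;> simp [baseStar, baseEnc]

theorem isPDAEncoding_baseEnc : IsPDAEncoding (baseStar (q := q)) baseEnc where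
  injective := by
    rintro ⟨⟨⟨a, ρ⟩, p⟩, b⟩ ⟨⟨⟨a', ρ'⟩, p'⟩, b'⟩ h
    have hpb := Pairs.orientEquiv.injective (a₁ := (p, b)) (a₂ := (p', b'))
    cases a <;> cases a' <;> simp_all [baseEnc, Pairs.orientEquiv, Prod.ext_iff]
  not_star_iff := by
    intro r c
    constructor
    · obtain ⟨a, x⟩ := r
      obtain ⟨c, d⟩ := c
      intro hne
      obtain ⟨⟨p, b⟩, hpb⟩ :=
        Pairs.orientEquiv.surjective ⟨(x, if a then d else c), by simpa [baseStar] using hne⟩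
      have horient : p.orient b = (x, if a then d else c) := congrArg Subtype.val hpb
      refine ⟨((!a, if a then c else d), p), b, ?_⟩
      cases a <;> simp [baseEnc, horient]
    · rintro ⟨⟨⟨a, ρ⟩, p⟩, b, h⟩
      obtain ⟨rfl, rfl⟩ := Prod.ext_iff.1 h
      have := p.orient_fst_ne_snd b
      cases a <;> simpa [baseStar, baseEnc]
  star_cross := by
    rintro ⟨⟨a, ρ⟩, p⟩ b b' hb
    obtain rfl : b' = !b := by cases b <;> cases b' <;> simp_all
    cases a <;> simp [baseStar, baseEnc, Pairs.orient_not]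

lemma card_filter_baseStar (c : Fin q × Fin q) : #{a | ¬ baseStar a c} = 2 * q - 2 := by
  have hstar : ({a | baseStar a c} : Finset (Bool × Fin q)) = {(false, c.1), (true, c.2)} := by
    ext ⟨_ | _, x⟩ <;> rw [mem_filter] <;> simp [baseStar]
  have := card_filter_add_card_filter_not (s := univ) (baseStar · c)
  rw [hstar, card_pair (by simp), card_univ, Fintype.card_prod, Fintype.card_bool,
    Fintype.card_fin] at this
  omega

end Base

lemma card_labels {q m t : ℕ} (htm : t ≤ m) :
    Fintype.card ((Fin m → Bool × Fin q) × (Fin t → Pairs q))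
      = 2 ^ (m - t) * (q - 1) ^ t * q ^ (m + t) := by
  obtain ⟨d, rfl⟩ := Nat.exists_eq_add_of_le htm
  refine Nat.eq_of_mul_eq_mul_left (pow_pos two_pos t) ?_
  simp only [Fintype.card_prod, Fintype.card_fun, Fintype.card_bool, Fintype.card_fin,
    Nat.add_sub_cancel_left]
  calc 2 ^ t * ((2 * q) ^ (t + d) * Fintype.card (Pairs q) ^ t)
      = (2 * q) ^ (t + d) * (2 * Fintype.card (Pairs q)) ^ t := by ring
    _ = 2 ^ t * (2 ^ d * (q - 1) ^ t * q ^ (t + d + t)) := by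
      rw [Pairs.two_mul_card]; ring

lemma cast_card_stars {q m t : ℕ} (hq : 0 < q) (htm : t ≤ m) :
    (((2 * q) ^ m - (2 * q - 2) ^ t * (2 * q) ^ (m - t) : ℕ) : ℚ)
      = (2 ^ m * q ^ m : ℕ) * (1 - (((q : ℚ) - 1) / q) ^ t) := by
  obtain ⟨d, rfl⟩ := Nat.exists_eq_add_of_le htm
  have hle : (2 * q - 2) ^ t * (2 * q) ^ d ≤ (2 * q) ^ (t + d) := by
    rw [pow_add]
    exact Nat.mul_le_mul_right _ (Nat.pow_le_pow_left (Nat.sub_le _ _) _)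
  rw [Nat.add_sub_cancel_left, Nat.cast_sub hle]
  have hq' : (q : ℚ) ≠ 0 := by positivity
  push_cast [show 2 ≤ 2 * q by omega]
  rw [show (2 * q - 2 : ℚ) ^ t = 2 ^ t * (q - 1) ^ t by rw [← mul_pow]; ring, div_pow]
  field_simp
  ring

end SchemeC

open SchemeC in
theorem scheme_C_general (q m t : ℕ) (hq : 2 ≤ q) (htm : t ≤ m) :
    ∃ Z : ℕ,
      (Z : ℚ) = (2 ^ m * q ^ m : ℕ) *
        (1 - (((q : ℚ) - 1) / (q : ℚ)) ^ t) ∧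
      ∃ P : Fin (2 ^ m * q ^ m) →
          Fin (Nat.choose m t * q ^ (2 * t)) →
          Option (Fin (2 ^ (m - t) * (q - 1) ^ t * q ^ (m + t))),
        IsPDA Z P ∧ PDARegular (Nat.choose m t * 2 ^ t) P := by
  obtain ⟨T, -, hT⟩ := exists_subset_card_eq (s := (univ : Finset (Fin m))) (by simpa using htm)
  have : Nonempty (Subsets m t) := ⟨⟨T, hT⟩⟩
  have hstars (k : Subsets m t × (Fin t → Fin q × Fin q)) :
      #{r | prodStar baseStar r k} = (2 * q) ^ m - (2 * q - 2) ^ t * (2 * q) ^ (m - t) := by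
    simpa using card_filter_prodStar card_filter_baseStar k
  refine ⟨_, cast_card_stars (by omega) htm, ?_⟩
  simpa [Fintype.card_finset_len] using
    (isPDAEncoding_baseEnc.prod baseStar_baseEnc).exists_isPDA_pdaRegular
      (by simp [mul_pow]) (by simp [Fintype.card_finset_len, pow_mul, sq]) (card_labels htm) hstars

/-- Scheme C: for positive integers q ≥ 2 and t ≤ m there is a
    C(m,t)2^t-regular PDA with parameters
    (C(m,t)q^{2t}, 2^mq^m, 2^mq^m(1−((q−1)/q)^t), 2^{m−t}(q−1)^tq^{m+t}). -/
theorem scheme_C (q m t : ℕ) (hq : 2 ≤ q) (ht : 0 < t) (htm : t ≤ m) :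
    ∃ Z : ℕ,
      (Z : ℚ) = (2 ^ m * q ^ m : ℕ) *
        (1 - (((q : ℚ) - 1) / (q : ℚ)) ^ t) ∧
      ∃ P : Fin (2 ^ m * q ^ m) →
          Fin (Nat.choose m t * q ^ (2 * t)) →
          Option (Fin (2 ^ (m - t) * (q - 1) ^ t * q ^ (m + t))),
        IsPDA Z P ∧ PDARegular (Nat.choose m t * 2 ^ t) P :=
  scheme_C_general q m t hq htm
end

section
/- Given a g1-regular (K1,F1,Z1,S1) base PDA with parameter λ and positive integers m, t with t ≤ m, each column of the array P_{m,t} defined by the union-of-Cartesian-products construction contains exactly λ^t·(F1/λ)^m·(1 − ((F1−Z1)/F1)^t) stars: a column indexed by (T, b) with T = {δ1 < … < δt} ⊆ [1:m] and b ∈ [1:K1]^t has a non-star entry at row (f, ε) ∈ [1:F1/λ]^m × [1:λ]^t if and only if P(f_{δh}, b_h) ≠ * for all h ∈ [1:t]. -/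
open Finset

/-! With q = F₁/λ, row periodicity makes the non-star rows of each column of P the λ-fold copy of
its non-star rows among the first q rows, so these number q·(F₁ − Z₁)/F₁ in every column.
Whether row (f, ε) of P_{m,t} is a star in column (T, b) depends only on the t coordinates
f_{δ₁}, …, f_{δ_t}, each of which must avoid the stars of one column of P: the non-star rows
therefore number (q·(F₁ − Z₁)/F₁)^t · q^(m−t) · λ^t, and the stars are the rest. -/

theorem card_filter_eq_mul_of_mod_periodic {F a q : ℕ} (hFq : a * q = F) (hle : q ≤ F)
    (p : Fin F → Prop) [DecidablePred p]
    (hp : ∀ i j : Fin F, i.val % q = j.val % q → (p i ↔ p j)) :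
    #{j | p j} = a * #{r : Fin q | p (Fin.castLE hle r)} := by
  let e : Fin a × Fin q ≃ Fin F := finProdFinEquiv.trans (finCongr hFq)
  have he : ∀ x, p (e x) ↔ p (Fin.castLE hle x.2) := fun x =>
    hp _ _ (by simp [e, Nat.mod_eq_of_lt x.2.isLt])
  calc #{j | p j}
      = #((univ : Finset (Fin a)) ×ˢ ({r : Fin q | p (Fin.castLE hle r)} : Finset (Fin q))) :=
        card_equiv e.symm fun j => by simpa using he (e.symm j)
    _ = a * #{r : Fin q | p (Fin.castLE hle r)} := by simp

theorem card_nonstar_initial_rows_mul {κ α : Type*} {F Z lam q : ℕ} (P : Fin F → κ → Option α)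
    (hFq : lam * q = F) (hle : q ≤ F) (hZ : ∀ k, #{j | P j k = none} = Z)
    (hper : ∀ j₁ j₂ : Fin F, ∀ k, j₁.val % q = j₂.val % q → (P j₁ k = none ↔ P j₂ k = none))
    (k : κ) :
    (#{r : Fin q | P (Fin.castLE hle r) k ≠ none} : ℚ) * F = q * (F - Z) := by
  set g := #{r : Fin q | P (Fin.castLE hle r) k ≠ none}
  have hcol : #{j | P j k ≠ none} = lam * g :=
    card_filter_eq_mul_of_mod_periodic hFq hle _ fun i j h => not_congr (hper i j k h)
  have hsplit : Z + lam * g = F := by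
    rw [← hZ k, ← hcol]
    simpa using card_filter_add_card_filter_not (s := univ) fun j => P j k = none
  have hsplitQ : (Z : ℚ) + lam * g = F := by exact_mod_cast hsplit
  have hFqQ : (lam : ℚ) * q = F := by exact_mod_cast hFq
  linear_combination (-(g : ℚ)) * hFqQ + q * hsplitQ

theorem card_filter_forall_apply_emb_mem {ι κ α : Type*} [Fintype ι] [Fintype κ] [Fintype α]
    [DecidableEq ι] [DecidableEq α] (δ : κ ↪ ι) (s : κ → Finset α) :
    #{f : ι → α | ∀ h, f (δ h) ∈ s h}
      = (∏ h, #(s h)) * Fintype.card α ^ (Fintype.card ι - Fintype.card κ) := by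
  let s' : ι → Finset α := Function.extend δ s fun _ => univ
  have hs'_range (h : κ) : s' (δ h) = s h := δ.injective.extend_apply _ _ _
  have hs'_compl {i : ι} (hi : i ∈ (univ.map δ)ᶜ) : s' i = univ :=
    Function.extend_apply' _ _ _ (by simpa using hi)
  have hpi : ({f : ι → α | ∀ h, f (δ h) ∈ s h} : Finset (ι → α)) = Fintype.piFinset s' := by
    ext f
    simp only [mem_filter, mem_univ, true_and, Fintype.mem_piFinset]
    refine ⟨fun hf i => ?_, fun hf h => hs'_range h ▸ hf (δ h)⟩
    by_cases hi : i ∈ univ.map δ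
    · obtain ⟨h, -, rfl⟩ := mem_map.mp hi
      exact (hs'_range h).symm ▸ hf h
    · simp [hs'_compl (mem_compl.mpr hi)]
  rw [hpi, Fintype.card_piFinset, ← prod_mul_prod_compl (univ.map δ), prod_map,
    prod_congr rfl fun h _ => congrArg card (hs'_range h),
    prod_congr rfl fun i hi => congrArg card (hs'_compl hi)]
  simp [card_compl]

theorem card_filter_not_fst {α β : Type*} [Fintype α] [Fintype β] (p : α → Prop)
    [DecidablePred p] :
    (#{x : α × β | ¬ p x.1} : ℚ) = (Fintype.card α - #{a | p a}) * Fintype.card β := by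
  have hsplit := card_filter_add_card_filter_not (s := (univ : Finset α)) p
  rw [← univ_product_univ, filter_product_left fun a => ¬ p a, card_product, card_univ,
    ← card_univ (α := α), ← hsplit]
  push_cast
  ring

theorem column_star_count_general (K₁ F₁ Z₁ S₁ lam : ℕ)
    (P : Fin F₁ → Fin K₁ → Option (Fin S₁))
    (hbase : IsBasePDA Z₁ lam P) (hF : 0 < F₁)
    (m t : ℕ) (htm : t ≤ m)
    (T : Finset (Fin m)) (hT : T.card = t) (b : Fin t → Fin K₁) :
    (((Finset.univ.filter
        (fun fe : (Fin m → Fin (F₁ / lam)) × (Fin t → Fin lam) =>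
          ¬ ∀ h : Fin t,
            P (Fin.castLE (Nat.div_le_self F₁ lam)
                (fe.1 ((T.orderIsoOfFin hT h : {x // x ∈ T}) : Fin m)))
              (b h) ≠ none)).card : ℚ))
      = (lam ^ t * (F₁ / lam) ^ m : ℕ) *
          (1 - (((F₁ : ℚ) - (Z₁ : ℚ)) / (F₁ : ℚ)) ^ t) := by
  obtain ⟨⟨hZ, -, -⟩, -, hdvd, -, hper, -⟩ := hbase
  set q := F₁ / lam
  let good : Fin K₁ → Finset (Fin q) := fun k =>
    {r | P (Fin.castLE (Nat.div_le_self F₁ lam) r) k ≠ none}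
  have hgood (k : Fin K₁) : (#(good k) : ℚ) = q * ((F₁ - Z₁) / F₁) := by
    rw [mul_div_assoc', eq_div_iff (by positivity)]
    exact card_nonstar_initial_rows_mul P (Nat.mul_div_cancel' hdvd) _ hZ hper k
  have hrows : #{f : Fin m → Fin q | ∀ h, f (T.orderEmbOfFin hT h) ∈ good (b h)}
      = (∏ h, #(good (b h))) * q ^ (m - t) := by
    simpa [hT] using
      card_filter_forall_apply_emb_mem (T.orderEmbOfFin hT).toEmbedding fun h => good (b h)
  have hpow : (q : ℚ) ^ t * q ^ (m - t) = q ^ m := pow_mul_pow_sub _ htm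
  calc (#{fe : (Fin m → Fin q) × (Fin t → Fin lam) |
          ¬ ∀ h : Fin t, P (Fin.castLE (Nat.div_le_self F₁ lam)
            (fe.1 ((T.orderIsoOfFin hT h : {x // x ∈ T}) : Fin m))) (b h) ≠ none} : ℚ)
      = #{fe : (Fin m → Fin q) × (Fin t → Fin lam) |
          ¬ ∀ h, fe.1 (T.orderEmbOfFin hT h) ∈ good (b h)} := by simp [good]
    _ = (q ^ m - (∏ h, #(good (b h))) * q ^ (m - t)) * lam ^ t := by
      rw [card_filter_not_fst fun f : Fin m → Fin q => ∀ h, f (T.orderEmbOfFin hT h) ∈ good (b h),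
        hrows]
      simp
    _ = _ := by
      simp_rw [Nat.cast_prod, hgood, prod_const, card_univ, Fintype.card_fin, mul_pow]
      push_cast
      linear_combination (-((lam : ℚ) ^ t * (((F₁ : ℚ) - Z₁) / F₁) ^ t)) * hpow

/-- in the union-of-Cartesian-products construction from a base
    PDA P, a column indexed by (T, b), T = {δ₁<…<δ_t} ⊆ [1:m], b ∈ [1:K₁]^t,
    has a non-star entry at row (f,ε) iff P(f_{δ_h}, b_h) ≠ * for all h; thus
    the number of stars in the column (rows (f,ε) where some P(f_{δ_h},b_h)=*)
    equals λ^t(F₁/λ)^m(1 − ((F₁−Z₁)/F₁)^t). -/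
theorem column_star_count (K₁ F₁ Z₁ S₁ g₁ lam : ℕ)
    (P : Fin F₁ → Fin K₁ → Option (Fin S₁))
    (hbase : IsBasePDA Z₁ lam P) (hreg : PDARegular g₁ P) (hF : 0 < F₁)
    (m t : ℕ) (ht : 0 < t) (htm : t ≤ m)
    (T : Finset (Fin m)) (hT : T.card = t) (b : Fin t → Fin K₁) :
    (((Finset.univ.filter
        (fun fe : (Fin m → Fin (F₁ / lam)) × (Fin t → Fin lam) =>
          ¬ ∀ h : Fin t,
            P (Fin.castLE (Nat.div_le_self F₁ lam)
                (fe.1 ((T.orderIsoOfFin hT h : {x // x ∈ T}) : Fin m)))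
              (b h) ≠ none)).card : ℚ))
      = (lam ^ t * (F₁ / lam) ^ m : ℕ) *
          (1 - (((F₁ : ℚ) - (Z₁ : ℚ)) / (F₁ : ℚ)) ^ t) :=
  column_star_count_general K₁ F₁ Z₁ S₁ lam P hbase hF m t htm T hT b
end
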